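/- arXiv:1607.02621 — 4 statements merged into one kernel-verified Lean document; each statement's English description precedes it below -/
import Mathlib

section
/- For every positive integer n there exists a constant C₀ > 0 depending only on n with the following property. Let 0 < r ≤ 1, let ε > 0, and let v be a smooth (at least C²) real-valued function on the closed ball B̄ = closedBall(0,r) ⊂ ℝⁿ satisfying v(0) + ε ≤ inf_{|x| = r} v(x). Define the contact set P = { x ∈ B : |Dv(x)| < ε/2 and v(y) ≥ v(x) + Dv(x)·(y − x) for all y ∈ B }, where B = ball(0,r) is the open ball and Dv is the gradient of v. Then εⁿ ≤ C₀ ∫_P det(D²v(x)) dx, where D²v(x) denotes the Hessian matrix of v at x and the integral is with respect to Lebesgue measure. -/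
open MeasureTheory Metric

/-- The Hessian matrix of second partial derivatives of `v : ℝⁿ → ℝ` at `x`. -/
noncomputable def hessianMatrix {n : ℕ} (v : EuclideanSpace ℝ (Fin n) → ℝ)
    (x : EuclideanSpace ℝ (Fin n)) : Matrix (Fin n) (Fin n) ℝ :=
  Matrix.of fun i j =>
    fderiv ℝ (fun y => fderiv ℝ v y (EuclideanSpace.single j (1 : ℝ))) x
      (EuclideanSpace.single i (1 : ℝ))

section Aux

open Filter Topology InnerProductSpace Matrix Set

variable {n : ℕ}

local notation "E" => EuclideanSpace ℝ (Fin n)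





lemma contact_exists {r ε : ℝ} {v : EuclideanSpace ℝ (Fin n) → ℝ}
    (hr : 0 < r) (hr1 : r ≤ 1) (hε : 0 < ε)
    (hv : ContDiffOn ℝ (⊤ : ℕ∞) v (closedBall (0 : E) r))
    (hb : ∀ x ∈ sphere (0 : E) r, v 0 + ε ≤ v x)
    {p : E} (hp : ‖p‖ < ε / 2) :
    ∃ x ∈ ball (0 : E) r, gradient v x = p ∧
      ∀ y ∈ ball (0 : E) r, v x + inner ℝ p (y - x) ≤ v y := by
  set g : E → ℝ := fun y => v y - inner ℝ p y with hg
  have hgc : ContinuousOn g (closedBall (0 : E) r) :=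
    hv.continuousOn.sub (innerSL ℝ p).continuous.continuousOn
  obtain ⟨x₀, hx₀mem, hx₀⟩ := (isCompact_closedBall (0 : E) r).exists_isMinOn
    (nonempty_closedBall.2 hr.le) hgc
  have h0mem : (0 : E) ∈ closedBall (0 : E) r := mem_closedBall_self hr.le
  have hball : x₀ ∈ ball (0 : E) r := by
    by_contra hxb
    have hsph : x₀ ∈ sphere (0 : E) r := by
      have h1 : dist x₀ 0 ≤ r := mem_closedBall.1 hx₀mem
      have h2 : ¬ dist x₀ 0 < r := fun h => hxb (mem_ball.2 h)
      exact mem_sphere.2 (le_antisymm h1 (not_lt.1 h2))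
    have hnorm : ‖x₀‖ = r := by
      simpa using mem_sphere_zero_iff_norm.1 hsph
    have hle : g x₀ ≤ g 0 := hx₀ h0mem
    have hip : (inner ℝ p x₀ : ℝ) ≤ ‖p‖ * r := by
      calc (inner ℝ p x₀ : ℝ) ≤ ‖p‖ * ‖x₀‖ := real_inner_le_norm p x₀
        _ = ‖p‖ * r := by rw [hnorm]
    have hpr : ‖p‖ * r < ε := by
      have h1 : ‖p‖ * r ≤ ‖p‖ * 1 := by
        exact mul_le_mul_of_nonneg_left hr1 (norm_nonneg p)
      nlinarith
    have hx₀v : v 0 + ε ≤ v x₀ := hb x₀ hsph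
    have : g 0 < g x₀ := by
      simp only [hg, inner_zero_right]
      nlinarith
    linarith
  have hlocal : IsLocalMin g x₀ :=
    hx₀.isLocalMin (Filter.mem_of_superset (isOpen_ball.mem_nhds hball)
      ball_subset_closedBall)
  have hdv : DifferentiableAt ℝ v x₀ :=
    (hv.contDiffAt (Filter.mem_of_superset (isOpen_ball.mem_nhds hball)
      ball_subset_closedBall)).differentiableAt (by simp)
  have hgderiv : HasFDerivAt g (fderiv ℝ v x₀ - innerSL ℝ p) x₀ :=
    hdv.hasFDerivAt.sub (innerSL ℝ p).hasFDerivAt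
  have hzero : fderiv ℝ g x₀ = 0 := hlocal.fderiv_eq_zero
  have hfv : fderiv ℝ v x₀ = innerSL ℝ p := by
    have := hgderiv.fderiv
    rw [hzero] at this
    exact sub_eq_zero.1 this.symm
  have hgrad : gradient v x₀ = p := by
    unfold gradient
    rw [hfv]
    have : innerSL ℝ p = toDual ℝ (EuclideanSpace ℝ (Fin n)) p := rfl
    rw [this, LinearIsometryEquiv.symm_apply_apply]
  refine ⟨x₀, hball, hgrad, fun y hy => ?_⟩
  have := hx₀ (ball_subset_closedBall hy)
  simp only [hg, Set.mem_setOf_eq] at this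
  have hinner : (inner ℝ p (y - x₀) : ℝ) = inner ℝ p y - inner ℝ p x₀ := inner_sub_right p y x₀
  linarith





set_option maxHeartbeats 1000000 in
lemma snd_deriv_nonneg {r : ℝ} {v : EuclideanSpace ℝ (Fin n) → ℝ}
    (hv : ContDiffOn ℝ (⊤ : ℕ∞) v (closedBall (0 : E) r))
    {x : E} (hx : x ∈ ball (0 : E) r)
    (hc : ∀ y ∈ ball (0 : E) r, v x + inner ℝ (gradient v x) (y - x) ≤ v y)
    (w : E) : 0 ≤ fderiv ℝ (fderiv ℝ v) x w w := by
  rcases eq_or_ne w 0 with rfl | hw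
  · simp
  -- find δ
  obtain ⟨ρ, hρ, hρsub⟩ := Metric.isOpen_iff.1 isOpen_ball x hx
  set δ : ℝ := ρ / ‖w‖ with hδdef
  have hδ : 0 < δ := div_pos hρ (norm_pos_iff.2 hw)
  have hmem : ∀ t : ℝ, |t| < δ → x + t • w ∈ ball (0 : E) r := by
    intro t ht
    apply hρsub
    rw [mem_ball]
    have : dist (x + t • w) x = |t| * ‖w‖ := by
      rw [dist_eq_norm]
      simp [norm_smul, abs_mul]
    rw [this]
    calc |t| * ‖w‖ < δ * ‖w‖ := by
          exact mul_lt_mul_of_pos_right ht (norm_pos_iff.2 hw)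
      _ = ρ := div_mul_cancel₀ ρ (norm_ne_zero_iff.2 hw)
  set p : E := gradient v x with hpdef
  have hcA : closedBall (0 : E) r ∈ 𝓝 x :=
    Filter.mem_of_superset (isOpen_ball.mem_nhds hx) ball_subset_closedBall
  have hdiff : ∀ y ∈ ball (0 : E) r, DifferentiableAt ℝ v y := fun y hy =>
    (hv.contDiffAt (Filter.mem_of_superset (isOpen_ball.mem_nhds hy)
      ball_subset_closedBall)).differentiableAt (by simp)
  set f'' : EuclideanSpace ℝ (Fin n) →L[ℝ] (EuclideanSpace ℝ (Fin n) →L[ℝ] ℝ) :=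
    fderiv ℝ (fderiv ℝ v) x with hf''def
  have hf'' : HasFDerivAt (fderiv ℝ v) f'' x := by
    have h1 : ContDiffAt ℝ 1 (fderiv ℝ v) x :=
      (hv.contDiffAt hcA).fderiv_right (m := 1) (WithTop.coe_le_coe.2 le_top)
    exact (h1.differentiableAt one_ne_zero).hasFDerivAt
  -- the 1-D functions
  set h : ℝ → ℝ := fun t => v (x + t • w) - v x - t * inner ℝ p w with hhdef
  set h' : ℝ → ℝ := fun t => fderiv ℝ v (x + t • w) w - inner ℝ p w with hh'def
  have hline : ∀ t : ℝ, HasDerivAt (fun s : ℝ => x + s • w) w t := by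
    intro t
    simpa using ((hasDerivAt_id t).smul_const w).const_add x
  have hA : ∀ t : ℝ, |t| < δ → HasDerivAt h (h' t) t := by
    intro t ht
    have hd : HasDerivAt (fun s : ℝ => v (x + s • w)) (fderiv ℝ v (x + t • w) w) t :=
      ((hdiff _ (hmem t ht)).hasFDerivAt).comp_hasDerivAt t (hline t)
    exact (hd.sub_const (v x)).sub (hasDerivAt_mul_const (inner ℝ p w : ℝ))
  have hB : HasDerivAt h' (f'' w w) 0 := by
    have h1 : HasFDerivAt (fderiv ℝ v) f'' (x + (0 : ℝ) • w) := by simpa using hf''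
    have h2 : HasDerivAt (fun s : ℝ => fderiv ℝ v (x + s • w)) (f'' w) 0 :=
      h1.comp_hasDerivAt 0 (hline 0)
    have h3 : HasDerivAt (fun s : ℝ => fderiv ℝ v (x + s • w) w) (f'' w w) 0 :=
      ((ContinuousLinearMap.apply ℝ ℝ w).hasFDerivAt.comp_hasDerivAt 0 h2)
    simpa [hh'def] using h3.sub_const (inner ℝ p w : ℝ)
  have hfvp : ∀ u : E, fderiv ℝ v x u = inner ℝ p u := by
    intro u
    rw [hpdef]
    exact (toDual_symm_apply).symm
  have hh'0 : h' 0 = 0 := by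
    simp [hh'def, hfvp w]
  have hnonneg : ∀ t : ℝ, |t| < δ → 0 ≤ h t := by
    intro t ht
    have := hc (x + t • w) (hmem t ht)
    have hy : (x + t • w) - x = t • w := by abel
    rw [hy, real_inner_smul_right] at this
    simp only [hhdef]
    linarith
  -- suppose f'' w w < 0
  by_contra hq
  push_neg at hq
  set q : ℝ := f'' w w with hqdef
  -- slope of h' tends to q
  have hslope : Tendsto (slope h' 0) (𝓝[≠] 0) (𝓝 q) :=
    hasDerivAt_iff_tendsto_slope.1 hB
  have hslope' : ∀ᶠ t in 𝓝[>] (0:ℝ), slope h' 0 t < q / 2 := by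
    have hev : ∀ᶠ t in 𝓝[≠] (0:ℝ), slope h' 0 t < q / 2 :=
      hslope.eventually_lt_const (by linarith)
    exact hev.filter_mono (nhdsWithin_mono 0 (fun t ht => ne_of_gt ht))
  obtain ⟨u, hu, husub⟩ := mem_nhdsGT_iff_exists_Ioc_subset.1 hslope'
  have hu0 : (0:ℝ) < u := hu
  set t₀ : ℝ := min u δ / 2 with ht₀def
  have ht₀pos : 0 < t₀ := by positivity
  have ht₀u : t₀ ≤ u := by
    have := min_le_left u δ; simp only [ht₀def]; linarith
  have ht₀δ : t₀ < δ := by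
    have := min_le_right u δ; simp only [ht₀def]; linarith
  have hneg : ∀ t ∈ Set.Ioo (0:ℝ) t₀, h' t < 0 := by
    intro t ht
    have htu : t ∈ Set.Ioc (0:ℝ) u := ⟨ht.1, le_of_lt (lt_of_lt_of_le ht.2 ht₀u)⟩
    have := husub htu
    simp only [Set.mem_setOf_eq] at this
    have hsl : slope h' 0 t = h' t / t := by
      simp [slope, hh'0, div_eq_inv_mul]
    rw [hsl] at this
    have h2 : h' t < q / 2 * t := by
      have := (div_lt_iff₀ ht.1).1 this
      linarith
    have h3 : q / 2 * t < 0 := mul_neg_of_neg_of_pos (by linarith) ht.1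
    exact h2.trans h3
  have hanti : StrictAntiOn h (Set.Icc 0 t₀) := by
    apply strictAntiOn_of_deriv_neg (convex_Icc 0 t₀)
    · intro t ht
      have htδ : |t| < δ := by
        rw [abs_lt]
        constructor <;> [linarith [ht.1]; linarith [ht.2]]
      exact ((hA t htδ).continuousAt).continuousWithinAt
    · intro t ht
      rw [interior_Icc] at ht
      have htδ : |t| < δ := by
        rw [abs_lt]
        constructor <;> [linarith [ht.1]; linarith [ht.2]]
      rw [(hA t htδ).deriv]
      exact hneg t ht
  have hlt : h t₀ < h 0 :=
    hanti (Set.left_mem_Icc.2 ht₀pos.le) (Set.right_mem_Icc.2 ht₀pos.le) ht₀pos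
  have h0 : h 0 = 0 := by simp [hhdef]
  have := hnonneg t₀ (by rw [abs_of_pos ht₀pos]; exact ht₀δ)
  linarith





noncomputable def dualIso (n : ℕ) :
    StrongDual ℝ (EuclideanSpace ℝ (Fin n)) ≃L[ℝ] EuclideanSpace ℝ (Fin n) :=
  (toDual ℝ _).symm.toContinuousLinearEquiv

lemma hessian_entry {v : EuclideanSpace ℝ (Fin n) → ℝ} {x : E}
    {f'' : EuclideanSpace ℝ (Fin n) →L[ℝ] (EuclideanSpace ℝ (Fin n) →L[ℝ] ℝ)}
    (hf'' : HasFDerivAt (fderiv ℝ v) f'' x) (i j : Fin n) :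
    hessianMatrix v x i j
      = f'' (EuclideanSpace.single i 1) (EuclideanSpace.single j 1) := by
  have h : HasFDerivAt (fun y => fderiv ℝ v y (EuclideanSpace.single j (1:ℝ)))
      ((ContinuousLinearMap.apply ℝ ℝ (EuclideanSpace.single j (1:ℝ))).comp f'') x :=
    (ContinuousLinearMap.apply ℝ ℝ (EuclideanSpace.single j (1:ℝ))).hasFDerivAt.comp x hf''
  simp only [hessianMatrix, Matrix.of_apply]
  rw [h.fderiv]
  rfl

lemma gradient_hasFDerivAt {v : EuclideanSpace ℝ (Fin n) → ℝ} {x : E}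
    {f'' : EuclideanSpace ℝ (Fin n) →L[ℝ] (EuclideanSpace ℝ (Fin n) →L[ℝ] ℝ)}
    (hf'' : HasFDerivAt (fderiv ℝ v) f'' x) :
    HasFDerivAt (gradient v) ((dualIso n : StrongDual ℝ (EuclideanSpace ℝ (Fin n)) →L[ℝ]
      EuclideanSpace ℝ (Fin n)).comp f'') x := by
  have h := (dualIso n).comp_hasFDerivAt_iff.2 hf''
  have heq : (⇑(dualIso n) ∘ fderiv ℝ v) = gradient v := by
    funext y
    rfl
  rwa [heq] at h

lemma hessian_det_eq {v : EuclideanSpace ℝ (Fin n) → ℝ} {x : E}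
    {f'' : EuclideanSpace ℝ (Fin n) →L[ℝ] (EuclideanSpace ℝ (Fin n) →L[ℝ] ℝ)}
    (hf'' : HasFDerivAt (fderiv ℝ v) f'' x) :
    ((dualIso n : StrongDual ℝ (EuclideanSpace ℝ (Fin n)) →L[ℝ]
      EuclideanSpace ℝ (Fin n)).comp f'').det = (hessianMatrix v x).det := by
  set L := (dualIso n : StrongDual ℝ (EuclideanSpace ℝ (Fin n)) →L[ℝ]
      EuclideanSpace ℝ (Fin n)).comp f'' with hL
  set b := (EuclideanSpace.basisFun (Fin n) ℝ).toBasis with hb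
  have hmat : LinearMap.toMatrix b b (L : EuclideanSpace ℝ (Fin n) →ₗ[ℝ] EuclideanSpace ℝ (Fin n))
      = (hessianMatrix v x)ᵀ := by
    ext i j
    rw [LinearMap.toMatrix_apply]
    have h1 : b j = EuclideanSpace.single j 1 := by
      simp [hb, EuclideanSpace.basisFun_apply]
    have h2 : ∀ z : EuclideanSpace ℝ (Fin n), b.repr z i = z i := by
      intro z
      simp [hb, OrthonormalBasis.coe_toBasis_repr_apply, EuclideanSpace.basisFun_repr]
    rw [h1, h2]
    have h5 : ∀ ℓ : StrongDual ℝ (EuclideanSpace ℝ (Fin n)),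
        ((toDual ℝ (EuclideanSpace ℝ (Fin n))).symm ℓ) i = ℓ (EuclideanSpace.single i 1) := by
      intro ℓ
      have ht : (inner ℝ ((toDual ℝ (EuclideanSpace ℝ (Fin n))).symm ℓ)
          (EuclideanSpace.single i 1) : ℝ) = ℓ (EuclideanSpace.single i 1) := toDual_symm_apply
      rw [← ht, real_inner_comm]
      simp [EuclideanSpace.inner_single_left]
    show (L (EuclideanSpace.single j 1)) i = (hessianMatrix v x)ᵀ i j
    have he : L (EuclideanSpace.single j 1)
        = (toDual ℝ (EuclideanSpace ℝ (Fin n))).symm (f'' (EuclideanSpace.single j 1)) := rfl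
    rw [he, h5, Matrix.transpose_apply, hessian_entry hf'' j i]
  have hdet : L.det = LinearMap.det
      (L : EuclideanSpace ℝ (Fin n) →ₗ[ℝ] EuclideanSpace ℝ (Fin n)) := rfl
  rw [hdet, ← LinearMap.det_toMatrix b, hmat, Matrix.det_transpose]

lemma hessian_posSemidef {v : EuclideanSpace ℝ (Fin n) → ℝ} {x : E}
    {f'' : EuclideanSpace ℝ (Fin n) →L[ℝ] (EuclideanSpace ℝ (Fin n) →L[ℝ] ℝ)}
    (hf'' : HasFDerivAt (fderiv ℝ v) f'' x)
    (hsymm : ∀ a c : EuclideanSpace ℝ (Fin n), f'' a c = f'' c a)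
    (hq : ∀ w : EuclideanSpace ℝ (Fin n), 0 ≤ f'' w w) :
    (hessianMatrix v x).PosSemidef := by
  refine Matrix.PosSemidef.of_dotProduct_mulVec_nonneg ?_ ?_
  · ext i j
    rw [Matrix.conjTranspose_apply, star_trivial, hessian_entry hf'', hessian_entry hf'']
    exact hsymm _ _
  · intro ξ
    have hstar : star ξ = ξ := by
      funext i
      exact star_trivial _
    rw [hstar]
    set w : EuclideanSpace ℝ (Fin n) := (WithLp.equiv 2 (Fin n → ℝ)).symm ξ with hwdef
    set b := (EuclideanSpace.basisFun (Fin n) ℝ).toBasis with hb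
    have hw : w = ∑ i, ξ i • EuclideanSpace.single i (1:ℝ) := by
      calc w = ∑ i, b.repr w i • b i := (b.sum_repr w).symm
        _ = ∑ i, ξ i • EuclideanSpace.single i (1:ℝ) := by
            apply Finset.sum_congr rfl
            intro i _
            have e1 : b.repr w i = ξ i := by
              simp [hb, OrthonormalBasis.coe_toBasis_repr_apply, EuclideanSpace.basisFun_repr,
                hwdef, PiLp.toLp_apply]
            have e2 : b i = EuclideanSpace.single i (1:ℝ) := by
              simp [hb, EuclideanSpace.basisFun_apply]
            rw [e1, e2]
    have hrhs : f'' w w = ∑ i, ∑ j, ξ i * (ξ j *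
        f'' (EuclideanSpace.single i 1) (EuclideanSpace.single j 1)) := by
      conv_lhs => rw [hw]
      simp only [map_sum, ContinuousLinearMap.sum_apply, ContinuousLinearMap.coe_sum',
        Finset.sum_apply]
      apply Finset.sum_congr rfl
      intro i _
      apply Finset.sum_congr rfl
      intro j _
      have hbil : ∀ (a c : ℝ) (u z : EuclideanSpace ℝ (Fin n)),
          f'' (a • u) (c • z) = a * (c * f'' u z) := by
        intro a c u z
        rw [map_smul f'' a u, ContinuousLinearMap.smul_apply, map_smul (f'' u) c z]
        simp [smul_eq_mul]
      rw [hbil, hsymm]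
      ring
    have hlhs : ξ ⬝ᵥ ((hessianMatrix v x) *ᵥ ξ) = ∑ i, ∑ j, ξ i * (ξ j *
        f'' (EuclideanSpace.single i 1) (EuclideanSpace.single j 1)) := by
      simp only [dotProduct, Matrix.mulVec, smul_eq_mul]
      rw [Finset.sum_congr rfl (fun i (_ : i ∈ Finset.univ) => Finset.mul_sum _ _ _)]
      apply Finset.sum_congr rfl
      intro i _
      apply Finset.sum_congr rfl
      intro j _
      rw [hessian_entry hf'' i j]
      ring
    rw [hlhs, ← hrhs]
    exact hq w

lemma hessian_det_nonneg {v : EuclideanSpace ℝ (Fin n) → ℝ} {x : E}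
    {f'' : EuclideanSpace ℝ (Fin n) →L[ℝ] (EuclideanSpace ℝ (Fin n) →L[ℝ] ℝ)}
    (hf'' : HasFDerivAt (fderiv ℝ v) f'' x)
    (hsymm : ∀ a c : EuclideanSpace ℝ (Fin n), f'' a c = f'' c a)
    (hq : ∀ w : EuclideanSpace ℝ (Fin n), 0 ≤ f'' w w) :
    0 ≤ (hessianMatrix v x).det := by
  have hps := hessian_posSemidef hf'' hsymm hq
  rw [hps.1.det_eq_prod_eigenvalues]
  apply Finset.prod_nonneg
  intro i _
  simpa using hps.eigenvalues_nonneg i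





lemma P_measurable {r ε : ℝ} {v : EuclideanSpace ℝ (Fin n) → ℝ}
    (hv : ContDiffOn ℝ (⊤ : ℕ∞) v (closedBall (0 : E) r)) :
    MeasurableSet {x ∈ ball (0 : E) r | ‖gradient v x‖ < ε / 2 ∧
      ∀ y ∈ ball (0 : E) r, v x + inner ℝ (gradient v x) (y - x) ≤ v y} := by
  have hvb : ContDiffOn ℝ (⊤ : ℕ∞) v (ball (0 : E) r) := hv.mono ball_subset_closedBall
  have hvc : ContinuousOn v (ball (0 : E) r) := hvb.continuousOn
  have hfc : ContinuousOn (fderiv ℝ v) (ball (0 : E) r) :=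
    hvb.continuousOn_fderiv_of_isOpen isOpen_ball (by simp)
  have hgc : ContinuousOn (gradient v) (ball (0 : E) r) := by
    have : gradient v = fun y => (toDual ℝ (EuclideanSpace ℝ (Fin n))).symm (fderiv ℝ v y) := rfl
    rw [this]
    exact ((toDual ℝ (EuclideanSpace ℝ (Fin n))).symm.continuous.comp_continuousOn hfc)
  have hvAt : ∀ x ∈ ball (0 : E) r, ContinuousAt v x := by
    intro x hx
    exact ((hv.contDiffAt (Filter.mem_of_superset (isOpen_ball.mem_nhds hx)
      ball_subset_closedBall)).continuousAt)
  -- the open "small gradient" piece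
  have hO1 : IsOpen {x ∈ ball (0 : E) r | ‖gradient v x‖ < ε / 2} := by
    have : {x ∈ ball (0 : E) r | ‖gradient v x‖ < ε / 2}
        = ball (0 : E) r ∩ (fun x => ‖gradient v x‖) ⁻¹' Iio (ε / 2) := by
      ext z; simp [Set.mem_setOf_eq]
    rw [this]
    exact hgc.norm.isOpen_inter_preimage isOpen_ball isOpen_Iio
  -- countable dense subset of the ball
  obtain ⟨s, hsc, hsd⟩ := TopologicalSpace.exists_countable_dense (ball (0 : E) r)
  set D : Set (EuclideanSpace ℝ (Fin n)) := Subtype.val '' s with hD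
  have hDsub : D ⊆ ball (0 : E) r := by
    rintro y ⟨⟨y', hy'⟩, _, rfl⟩
    exact hy'
  have hDc : D.Countable := hsc.image _
  have hDd : ∀ y ∈ ball (0 : E) r, y ∈ closure D := by
    intro y hy
    exact closure_subtype.1 (hsd.closure_eq ▸ Set.mem_univ (⟨y, hy⟩ : ball (0 : E) r))
  -- for each y, the "bad" open set
  have hS : ∀ y ∈ ball (0 : E) r, IsOpen (ball (0 : E) r ∩
      (fun x => v x + inner ℝ (gradient v x) (y - x) - v y) ⁻¹' Ioi (0:ℝ)) := by
    intro y hy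
    apply ContinuousOn.isOpen_inter_preimage _ isOpen_ball isOpen_Ioi
    exact ((hvc.add (hgc.inner (continuousOn_const.sub (continuousOn_id)))).sub
      continuousOn_const)
  -- P equals a countable intersection
  have hPeq : {x ∈ ball (0 : E) r | ‖gradient v x‖ < ε / 2 ∧
      ∀ y ∈ ball (0 : E) r, v x + inner ℝ (gradient v x) (y - x) ≤ v y}
      = {x ∈ ball (0 : E) r | ‖gradient v x‖ < ε / 2} ∩
        ⋂ y ∈ D, (ball (0 : E) r \ (ball (0 : E) r ∩
          (fun x => v x + inner ℝ (gradient v x) (y - x) - v y) ⁻¹' Ioi (0:ℝ))) := by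
    ext x
    simp only [Set.mem_setOf_eq, Set.mem_inter_iff, Set.mem_iInter, Set.mem_diff,
      Set.mem_preimage, Set.mem_Ioi]
    constructor
    · rintro ⟨hxb, hgrad, hcon⟩
      refine ⟨⟨hxb, hgrad⟩, fun y hyD => ⟨hxb, fun hbad => ?_⟩⟩
      have := hcon y (hDsub hyD)
      linarith [hbad.2]
    · rintro ⟨⟨hxb, hgrad⟩, hint⟩
      refine ⟨hxb, hgrad, fun y hy => ?_⟩
      set φ : EuclideanSpace ℝ (Fin n) → ℝ :=
        fun z => v x + inner ℝ (gradient v x) (z - x) - v z with hφ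
      have hφz : ∀ z ∈ D, φ z ≤ 0 := by
        intro z hz
        have h1 := (hint z hz).2
        by_contra hcc
        push_neg at hcc
        exact h1 ⟨hxb, hcc⟩
      have hφc : ContinuousAt φ y := by
        apply ContinuousAt.sub _ (hvAt y hy)
        apply ContinuousAt.add continuousAt_const
        exact (continuousAt_const.inner ((continuousAt_id).sub continuousAt_const))
      have hne : (𝓝[D] y).NeBot := mem_closure_iff_nhdsWithin_neBot.1 (hDd y hy)
      have htend : Tendsto φ (𝓝[D] y) (𝓝 (φ y)) :=
        (hφc.tendsto).mono_left nhdsWithin_le_nhds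
      have hev : ∀ᶠ z in 𝓝[D] y, φ z ≤ 0 := eventually_nhdsWithin_of_forall hφz
      have : φ y ≤ 0 := le_of_tendsto htend hev
      simp only [hφ] at this
      linarith
  rw [hPeq]
  apply MeasurableSet.inter hO1.measurableSet
  exact MeasurableSet.biInter hDc (fun y hyD =>
    measurableSet_ball.diff (hS y (hDsub hyD)).measurableSet)






-- second derivative exists at interior points
lemma snd_fderiv_hasFDerivAt {r : ℝ} {v : EuclideanSpace ℝ (Fin n) → ℝ}
    (hv : ContDiffOn ℝ (⊤ : ℕ∞) v (closedBall (0 : E) r)) {x : E} (hx : x ∈ ball (0 : E) r) :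
    HasFDerivAt (fderiv ℝ v) (fderiv ℝ (fderiv ℝ v) x) x := by
  have hcA : closedBall (0 : E) r ∈ 𝓝 x :=
    Filter.mem_of_superset (isOpen_ball.mem_nhds hx) ball_subset_closedBall
  have h1 : ContDiffAt ℝ 1 (fderiv ℝ v) x :=
    (hv.contDiffAt hcA).fderiv_right (m := 1) (WithTop.coe_le_coe.2 le_top)
  exact (h1.differentiableAt one_ne_zero).hasFDerivAt

lemma F2_eq_on_ball {r : ℝ} {v : EuclideanSpace ℝ (Fin n) → ℝ}
    {x : E} (hx : x ∈ ball (0 : E) r) :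
    fderivWithin ℝ (fderivWithin ℝ v (closedBall (0 : E) r)) (closedBall (0 : E) r) x
      = fderiv ℝ (fderiv ℝ v) x := by
  have hcA : closedBall (0 : E) r ∈ 𝓝 x :=
    Filter.mem_of_superset (isOpen_ball.mem_nhds hx) ball_subset_closedBall
  rw [fderivWithin_of_mem_nhds hcA]
  apply Filter.EventuallyEq.fderiv_eq
  apply Filter.eventuallyEq_of_mem (isOpen_ball.mem_nhds hx)
  intro y hy
  exact fderivWithin_of_mem_nhds
    (Filter.mem_of_superset (isOpen_ball.mem_nhds hy) ball_subset_closedBall)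

lemma detcont_integrableOn {r : ℝ} {v : EuclideanSpace ℝ (Fin n) → ℝ} (hr : 0 < r)
    (hv : ContDiffOn ℝ (⊤ : ℕ∞) v (closedBall (0 : E) r)) :
    IntegrableOn (fun x => ((dualIso n : StrongDual ℝ (EuclideanSpace ℝ (Fin n)) →L[ℝ]
        EuclideanSpace ℝ (Fin n)).comp
      (fderivWithin ℝ (fderivWithin ℝ v (closedBall (0 : E) r)) (closedBall (0 : E) r) x)).det)
      (closedBall (0 : E) r) volume := by
  have hu : UniqueDiffOn ℝ (closedBall (0 : E) r) := by
    apply uniqueDiffOn_convex (convex_closedBall _ _)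
    rw [interior_closedBall _ hr.ne']
    exact ⟨0, mem_ball_self hr⟩
  have hF1 : ContDiffOn ℝ (⊤ : ℕ∞) (fderivWithin ℝ v (closedBall (0 : E) r)) (closedBall (0 : E) r) :=
    hv.fderivWithin hu (by simp)
  have hF2c : ContinuousOn
      (fderivWithin ℝ (fderivWithin ℝ v (closedBall (0 : E) r)) (closedBall (0 : E) r))
      (closedBall (0 : E) r) :=
    (hF1.fderivWithin (m := 1) hu (WithTop.coe_le_coe.2 le_top)).continuousOn
  have hcomp : ContinuousOn (fun x =>
      (dualIso n : StrongDual ℝ (EuclideanSpace ℝ (Fin n)) →L[ℝ]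
        EuclideanSpace ℝ (Fin n)).comp
      (fderivWithin ℝ (fderivWithin ℝ v (closedBall (0 : E) r)) (closedBall (0 : E) r) x))
      (closedBall (0 : E) r) := by
    have hA : Continuous fun (T : EuclideanSpace ℝ (Fin n) →L[ℝ]
        StrongDual ℝ (EuclideanSpace ℝ (Fin n))) =>
        (dualIso n : StrongDual ℝ (EuclideanSpace ℝ (Fin n)) →L[ℝ]
          EuclideanSpace ℝ (Fin n)).comp T :=
      (ContinuousLinearMap.compL ℝ (EuclideanSpace ℝ (Fin n))
        (StrongDual ℝ (EuclideanSpace ℝ (Fin n))) (EuclideanSpace ℝ (Fin n))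
        (dualIso n : StrongDual ℝ (EuclideanSpace ℝ (Fin n)) →L[ℝ]
          EuclideanSpace ℝ (Fin n))).continuous
    exact hA.comp_continuousOn hF2c
  have hdetc : ContinuousOn (fun x =>
      ((dualIso n : StrongDual ℝ (EuclideanSpace ℝ (Fin n)) →L[ℝ]
        EuclideanSpace ℝ (Fin n)).comp
      (fderivWithin ℝ (fderivWithin ℝ v (closedBall (0 : E) r)) (closedBall (0 : E) r) x)).det)
      (closedBall (0 : E) r) :=
    ContinuousLinearMap.continuous_det.comp_continuousOn hcomp
  exact hdetc.integrableOn_compact (isCompact_closedBall _ _)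


end Aux

section Main

open Filter Topology InnerProductSpace

/-- Szekelyhidi's Aleksandrov–Bakelman–Pucci type estimate: for a smooth function `v` on the
closed ball of radius `0 < r ≤ 1` with `v 0 + ε ≤ inf_{∂B} v`, one has
`εⁿ ≤ C₀ ∫_P det D²v`, where `P` is the set of contact points with small gradient. -/
theorem abp_estimate (n : ℕ) (hn : 0 < n) :
    ∃ C₀ : ℝ, 0 < C₀ ∧
      ∀ (r ε : ℝ) (v : EuclideanSpace ℝ (Fin n) → ℝ),
        0 < r → r ≤ 1 → 0 < ε →
        ContDiffOn ℝ (⊤ : ℕ∞) v (closedBall (0 : EuclideanSpace ℝ (Fin n)) r) →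
        (∀ x ∈ sphere (0 : EuclideanSpace ℝ (Fin n)) r, v 0 + ε ≤ v x) →
        ε ^ n ≤ C₀ *
          ∫ x in {x ∈ ball (0 : EuclideanSpace ℝ (Fin n)) r |
              ‖gradient v x‖ < ε / 2 ∧
              ∀ y ∈ ball (0 : EuclideanSpace ℝ (Fin n)) r,
                v x + inner ℝ (gradient v x) (y - x) ≤ v y},
            (hessianMatrix v x).det := by
  classical
  haveI : Nontrivial (EuclideanSpace ℝ (Fin n)) :=
    Module.nontrivial_of_finrank_pos (R := ℝ)
      (by rw [finrank_euclideanSpace_fin]; exact hn)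
  have hμBpos : (0:ENNReal) < volume (ball (0 : EuclideanSpace ℝ (Fin n)) 1) :=
    measure_ball_pos _ _ one_pos
  have hμBfin : volume (ball (0 : EuclideanSpace ℝ (Fin n)) 1) < ⊤ := measure_ball_lt_top
  set m : ℝ := (volume (ball (0 : EuclideanSpace ℝ (Fin n)) 1)).toReal with hm
  have hmpos : 0 < m := ENNReal.toReal_pos hμBpos.ne' hμBfin.ne
  refine ⟨2 ^ n / m, div_pos (by positivity) hmpos, ?_⟩
  intro r ε v hr hr1 hε hv hb
  set P := {x ∈ ball (0 : EuclideanSpace ℝ (Fin n)) r |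
      ‖gradient v x‖ < ε / 2 ∧
      ∀ y ∈ ball (0 : EuclideanSpace ℝ (Fin n)) r,
        v x + inner ℝ (gradient v x) (y - x) ≤ v y} with hPdef
  have hPmeas : MeasurableSet P := P_measurable hv
  have hPsub : P ⊆ ball (0 : EuclideanSpace ℝ (Fin n)) r := fun x hx => hx.1
  have hf'' : ∀ x ∈ P, HasFDerivAt (fderiv ℝ v) (fderiv ℝ (fderiv ℝ v) x) x :=
    fun x hx => snd_fderiv_hasFDerivAt hv (hPsub hx)
  have himg : ball (0 : EuclideanSpace ℝ (Fin n)) (ε/2) ⊆ gradient v '' P := by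
    intro p hp
    obtain ⟨x, hxb, hgrad, hcon⟩ := contact_exists hr hr1 hε hv hb (mem_ball_zero_iff.1 hp)
    refine ⟨x, ⟨hxb, ?_, ?_⟩, hgrad⟩
    · rw [hgrad]; exact mem_ball_zero_iff.1 hp
    · intro y hy
      rw [hgrad]
      exact hcon y hy
  have hsymm : ∀ x ∈ P, ∀ a c : EuclideanSpace ℝ (Fin n),
      fderiv ℝ (fderiv ℝ v) x a c = fderiv ℝ (fderiv ℝ v) x c a := by
    intro x hx
    have hev : ∀ᶠ y in 𝓝 x, HasFDerivAt v (fderiv ℝ v y) y := by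
      apply Filter.eventually_of_mem (isOpen_ball.mem_nhds (hPsub hx))
      intro y hy
      exact ((hv.contDiffAt (Filter.mem_of_superset (isOpen_ball.mem_nhds hy)
        ball_subset_closedBall)).differentiableAt (by simp)).hasFDerivAt
    exact second_derivative_symmetric_of_eventually hev (hf'' x hx)
  have hquad : ∀ x ∈ P, ∀ w : EuclideanSpace ℝ (Fin n),
      0 ≤ fderiv ℝ (fderiv ℝ v) x w w :=
    fun x hx w => snd_deriv_nonneg hv (hPsub hx) hx.2.2 w
  have hdet0 : ∀ x ∈ P, 0 ≤ (hessianMatrix v x).det :=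
    fun x hx => hessian_det_nonneg (hf'' x hx) (hsymm x hx) (hquad x hx)
  have hdeteq : ∀ x ∈ P,
      ((dualIso n : StrongDual ℝ (EuclideanSpace ℝ (Fin n)) →L[ℝ]
        EuclideanSpace ℝ (Fin n)).comp (fderiv ℝ (fderiv ℝ v) x)).det
      = (hessianMatrix v x).det := fun x hx => hessian_det_eq (hf'' x hx)
  have key : volume (gradient v '' P) ≤ ∫⁻ x in P,
      ENNReal.ofReal |((dualIso n : StrongDual ℝ (EuclideanSpace ℝ (Fin n)) →L[ℝ]
        EuclideanSpace ℝ (Fin n)).comp (fderiv ℝ (fderiv ℝ v) x)).det| :=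
    addHaar_image_le_lintegral_abs_det_fderiv volume hPmeas
      (fun x hx => (gradient_hasFDerivAt (hf'' x hx)).hasFDerivWithinAt)
  have hcong : (∫⁻ x in P,
      ENNReal.ofReal |((dualIso n : StrongDual ℝ (EuclideanSpace ℝ (Fin n)) →L[ℝ]
        EuclideanSpace ℝ (Fin n)).comp (fderiv ℝ (fderiv ℝ v) x)).det|)
      = ∫⁻ x in P, ENNReal.ofReal ((hessianMatrix v x).det) := by
    apply setLIntegral_congr_fun hPmeas
    intro x hx
    dsimp only
    rw [hdeteq x hx, abs_of_nonneg (hdet0 x hx)]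
  have hint : IntegrableOn (fun x => (hessianMatrix v x).det) P volume := by
    have h1 := (detcont_integrableOn hr hv).mono_set
      (hPsub.trans ball_subset_closedBall)
    apply h1.congr_fun _ hPmeas
    intro x hx
    simp only
    rw [F2_eq_on_ball (hPsub hx)]
    exact hdeteq x hx
  have hof : (∫⁻ x in P, ENNReal.ofReal ((hessianMatrix v x).det))
      = ENNReal.ofReal (∫ x in P, (hessianMatrix v x).det) :=
    (ofReal_integral_eq_lintegral_ofReal hint
      (ae_restrict_of_forall_mem hPmeas hdet0)).symm
  have hball : volume (ball (0 : EuclideanSpace ℝ (Fin n)) (ε/2))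
      = ENNReal.ofReal ((ε/2) ^ n) * volume (ball (0 : EuclideanSpace ℝ (Fin n)) 1) := by
    rw [Measure.addHaar_ball volume (0 : EuclideanSpace ℝ (Fin n))
      (by positivity : (0:ℝ) ≤ ε/2), finrank_euclideanSpace_fin]
  have hchain : ENNReal.ofReal ((ε/2)^n) * volume (ball (0 : EuclideanSpace ℝ (Fin n)) 1)
      ≤ ENNReal.ofReal (∫ x in P, (hessianMatrix v x).det) := by
    rw [← hball, ← hof, ← hcong]
    exact le_trans (measure_mono himg) key
  have hI0 : 0 ≤ ∫ x in P, (hessianMatrix v x).det := setIntegral_nonneg hPmeas hdet0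
  have h2 : (ε/2)^n * m ≤ ∫ x in P, (hessianMatrix v x).det := by
    have h3 := ENNReal.toReal_mono ENNReal.ofReal_ne_top hchain
    rw [ENNReal.toReal_mul, ENNReal.toReal_ofReal (by positivity),
      ENNReal.toReal_ofReal hI0] at h3
    exact h3
  calc ε ^ n = 2 ^ n * (ε/2)^n := by
        rw [div_pow]
        field_simp
    _ ≤ 2 ^ n * ((∫ x in P, (hessianMatrix v x).det) / m) := by
        apply mul_le_mul_of_nonneg_left _ (by positivity)
        exact (le_div_iff₀ hmpos).2 h2
    _ = 2 ^ n / m * ∫ x in P, (hessianMatrix v x).det := by ring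

end Main
end

section
/- Let H be a 3×3 real symmetric positive semidefinite matrix, let c₁, c₂ be real numbers with 1/2 ≤ c₁ ≤ 1 and 1/2 ≤ c₂ ≤ 1, and let K > 0 satisfy (H₁₁ + c₁)(H₂₂ + H₃₃ + c₂) − H₁₂² − H₁₃² = K. Then H₁₁ + H₂₂ + H₃₃ + 1/2 ≤ 2K, and consequently det H ≤ ( (2K − 1/2)/3 )³. -/
open Finset

theorem Real.prod_le_arith_mean_pow {ι : Type*} (s : Finset ι) (z : ι → ℝ)
    (hz : ∀ i ∈ s, 0 ≤ z i) : ∏ i ∈ s, z i ≤ ((∑ i ∈ s, z i) / #s) ^ #s := by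
  rcases s.eq_empty_or_nonempty with rfl | hs
  · simp
  have hcard : #s ≠ 0 := hs.card_pos.ne'
  have amgm : (∏ i ∈ s, z i) ^ ((#s : ℝ)⁻¹) ≤ (∑ i ∈ s, z i) / #s := by
    simpa using Real.geom_mean_le_arith_mean s (fun _ ↦ 1) z (by simp) (by simpa using hs) hz
  calc ∏ i ∈ s, z i = ((∏ i ∈ s, z i) ^ ((#s : ℝ)⁻¹)) ^ #s :=
        (Real.rpow_inv_natCast_pow (prod_nonneg hz) hcard).symm
    _ ≤ ((∑ i ∈ s, z i) / #s) ^ #s :=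
        pow_le_pow_left₀ (Real.rpow_nonneg (prod_nonneg hz) _) amgm _

namespace Matrix.PosSemidef

variable {n : Type*} {A : Matrix n n ℝ}

theorem sq_apply_le_mul_apply (hA : A.PosSemidef) (i j : n) : A i j ^ 2 ≤ A i i * A j j := by
  have hminor := (hA.submatrix ![i, j]).det_nonneg
  have hsymm : A j i = A i j := by simpa using hA.isHermitian.apply i j
  simp only [det_fin_two, submatrix_apply, Matrix.cons_val_zero, Matrix.cons_val_one] at hminor
  rw [hsymm, ← sq] at hminor
  linarith

theorem det_le_trace_div_card_pow [Fintype n] [DecidableEq n] (hA : A.PosSemidef) :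
    A.det ≤ (A.trace / Fintype.card n) ^ Fintype.card n := by
  rw [hA.isHermitian.det_eq_prod_eigenvalues, hA.isHermitian.trace_eq_sum_eigenvalues]
  simpa using Real.prod_le_arith_mean_pow univ _ fun i _ ↦ hA.eigenvalues_nonneg i

end Matrix.PosSemidef

theorem key_estimate_algebraic_general
    (H : Matrix (Fin 3) (Fin 3) ℝ) (hH : H.PosSemidef)
    (c₁ c₂ K : ℝ)
    (hc₁ : 1 / 2 ≤ c₁)
    (hc₂ : 1 / 2 ≤ c₂)
    (heq : (H 0 0 + c₁) * (H 1 1 + H 2 2 + c₂) - (H 0 1) ^ 2 - (H 0 2) ^ 2 = K) :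
    H 0 0 + H 1 1 + H 2 2 + 1 / 2 ≤ 2 * K ∧
      H.det ≤ ((2 * K - 1 / 2) / 3) ^ 3 := by
  have h₀ : 0 ≤ H 0 0 := hH.diag_nonneg
  have h₁ : 0 ≤ H 1 1 := hH.diag_nonneg
  have h₂ : 0 ≤ H 2 2 := hH.diag_nonneg
  have h₀₁ := hH.sq_apply_le_mul_apply 0 1
  have h₀₂ := hH.sq_apply_le_mul_apply 0 2
  -- The minors cancel the product of the diagonal terms, leaving `K ≥ c₂ H₁₁ + c₁ (H₂₂ + H₃₃) + c₁ c₂`.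
  have htrace : H 0 0 + H 1 1 + H 2 2 + 1 / 2 ≤ 2 * K := by
    nlinarith [mul_nonneg (sub_nonneg.2 hc₂) h₀, mul_nonneg (sub_nonneg.2 hc₁) (add_nonneg h₁ h₂),
      mul_nonneg (sub_nonneg.2 hc₁) (sub_nonneg.2 hc₂)]
  refine ⟨htrace, ?_⟩
  calc H.det ≤ ((H 0 0 + H 1 1 + H 2 2) / 3) ^ 3 := by
        simpa [Matrix.trace_fin_three] using hH.det_le_trace_div_card_pow
    _ ≤ ((2 * K - 1 / 2) / 3) ^ 3 := by gcongr; linarith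

/-- The algebraic form of the key estimate (2.1) of Section 3: if `H` is a real symmetric
positive semidefinite 3×3 matrix, `1/2 ≤ c₁, c₂ ≤ 1`, `K > 0` and
`(H₁₁ + c₁)(H₂₂ + H₃₃ + c₂) − H₁₂² − H₁₃² = K`, then `tr H + 1/2 ≤ 2K` and
`det H ≤ ((2K − 1/2)/3)³`. -/
theorem key_estimate_algebraic
    (H : Matrix (Fin 3) (Fin 3) ℝ) (hH : H.PosSemidef)
    (c₁ c₂ K : ℝ)
    (hc₁ : 1 / 2 ≤ c₁) (hc₁' : c₁ ≤ 1)
    (hc₂ : 1 / 2 ≤ c₂) (hc₂' : c₂ ≤ 1)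
    (hK : 0 < K)
    (heq : (H 0 0 + c₁) * (H 1 1 + H 2 2 + c₂) - (H 0 1) ^ 2 - (H 0 2) ^ 2 = K) :
    H 0 0 + H 1 1 + H 2 2 + 1 / 2 ≤ 2 * K ∧
      H.det ≤ ((2 * K - 1 / 2) / 3) ^ 3 :=
  key_estimate_algebraic_general H hH c₁ c₂ K hc₁ hc₂ heq
end

section
/- Fix θ ∈ ℝ and for a C² function u of (x, y, t) ∈ ℝ³ write u_X = cosθ·∂_x u − sinθ·∂_y u, u_Y = sinθ·∂_x u + cosθ·∂_y u, with u_XX, u_XY, u_Xt, u_YY, u_tt the corresponding second derivatives. For every smooth ℤ³-periodic function F : ℝ³ → ℝ there exists a constant C > 0, depending only on θ and F, such that every smooth ℤ³-periodic function u : ℝ³ → ℝ with sup u = 0 which satisfies, at every point, the equation (u_XX + 1)(u_YY + u_tt + u_t + 1) − u_XY² − u_Xt² = e^F together with the ellipticity conditions u_XX + 1 > 0 and u_YY + u_tt + u_t + 1 > 0, obeys ‖u‖_{L^∞} ≤ C. -/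
/-- The partial derivative of `w : ℝ³ → ℝ` in the `i`-th coordinate direction
(coordinates `(x, y, t)` correspond to indices `0, 1, 2`). -/
noncomputable def pd (i : Fin 3) (w : EuclideanSpace ℝ (Fin 3) → ℝ) :
    EuclideanSpace ℝ (Fin 3) → ℝ :=
  fun x => fderiv ℝ w x (EuclideanSpace.single i (1 : ℝ))

/-- The derivative `w_X = cos θ ∂_x w − sin θ ∂_y w`. -/
noncomputable def Xd (θ : ℝ) (w : EuclideanSpace ℝ (Fin 3) → ℝ) :
    EuclideanSpace ℝ (Fin 3) → ℝ :=
  fun x => Real.cos θ * pd 0 w x - Real.sin θ * pd 1 w x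

/-- The derivative `w_Y = sin θ ∂_x w + cos θ ∂_y w`. -/
noncomputable def Yd (θ : ℝ) (w : EuclideanSpace ℝ (Fin 3) → ℝ) :
    EuclideanSpace ℝ (Fin 3) → ℝ :=
  fun x => Real.sin θ * pd 0 w x + Real.cos θ * pd 1 w x

open MeasureTheory Set

noncomputable section KTaux

abbrev E3 : Type := EuclideanSpace ℝ (Fin 3)

/-- Directional derivative. -/
def dir (v : E3) (w : E3 → ℝ) : E3 → ℝ := fun x => fderiv ℝ w x v

lemma contDiff_dir {w : E3 → ℝ} (hw : ContDiff ℝ (⊤ : ℕ∞) w) (v : E3) : ContDiff ℝ (⊤ : ℕ∞) (dir v w) :=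
  (hw.fderiv_right (by simp)).clm_apply contDiff_const

/-- The algebra of smooth functions on `ℝ³`. -/
def SA : Subalgebra ℝ (E3 → ℝ) where
  carrier := {f | ContDiff ℝ (⊤ : ℕ∞) f}
  mul_mem' := fun {a b} (hf : ContDiff ℝ (⊤ : ℕ∞) a) (hg : ContDiff ℝ (⊤ : ℕ∞) b) => hf.mul hg
  add_mem' := fun {a b} (hf : ContDiff ℝ (⊤ : ℕ∞) a) (hg : ContDiff ℝ (⊤ : ℕ∞) b) => hf.add hg
  algebraMap_mem' := fun c => show ContDiff ℝ (⊤ : ℕ∞) (fun _ : E3 => c) from contDiff_const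

lemma SA_smooth (f : SA) : ContDiff ℝ (⊤ : ℕ∞) (f : E3 → ℝ) := f.2

lemma SA_diff (f : SA) (x : E3) : DifferentiableAt ℝ (f : E3 → ℝ) x :=
  ((SA_smooth f).differentiable (by simp)).differentiableAt

/-- Directional derivative as an operator on smooth functions. -/
def DD (v : E3) (f : SA) : SA := ⟨dir v (f : E3 → ℝ), contDiff_dir (SA_smooth f) v⟩

lemma DD_add (v : E3) (f g : SA) : DD v (f + g) = DD v f + DD v g := by
  apply Subtype.ext; funext x
  show fderiv ℝ (fun y => (f:E3→ℝ) y + (g:E3→ℝ) y) x v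
      = fderiv ℝ (f:E3→ℝ) x v + fderiv ℝ (g:E3→ℝ) x v
  rw [fderiv_fun_add (SA_diff f x) (SA_diff g x)]; rfl

lemma DD_mul (v : E3) (f g : SA) : DD v (f * g) = DD v f * g + f * DD v g := by
  apply Subtype.ext; funext x
  show fderiv ℝ (fun y => (f:E3→ℝ) y * (g:E3→ℝ) y) x v
      = fderiv ℝ (f:E3→ℝ) x v * (g:E3→ℝ) x + (f:E3→ℝ) x * fderiv ℝ (g:E3→ℝ) x v
  rw [fderiv_fun_mul (SA_diff f x) (SA_diff g x)]; simp; ring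

lemma DD_sub (v : E3) (f g : SA) : DD v (f - g) = DD v f - DD v g := by
  apply Subtype.ext; funext x
  show fderiv ℝ (fun y => (f:E3→ℝ) y - (g:E3→ℝ) y) x v
      = fderiv ℝ (f:E3→ℝ) x v - fderiv ℝ (g:E3→ℝ) x v
  rw [fderiv_fun_sub (SA_diff f x) (SA_diff g x)]; rfl

lemma DD_one (v : E3) : DD v 1 = 0 := by
  apply Subtype.ext; funext x
  show fderiv ℝ (fun _ => (1:ℝ)) x v = 0
  rw [fderiv_fun_const]; rfl

lemma DD_comm (a b : E3) (f : SA) : DD a (DD b f) = DD b (DD a f) := by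
  apply Subtype.ext; funext x
  have h2 : DifferentiableAt ℝ (fderiv ℝ (f:E3→ℝ)) x :=
    (((SA_smooth f).fderiv_right (m := (⊤ : ℕ∞)) (by simp)).differentiable (by simp)).differentiableAt
  have key : ∀ (c d : E3), dir c (dir d (f:E3→ℝ)) x = fderiv ℝ (fderiv ℝ (f:E3→ℝ)) x c d := by
    intro c d
    show fderiv ℝ (fun y => (fderiv ℝ (f:E3→ℝ) y) ((fun _ => d) y)) x c = _
    rw [fderiv_clm_apply h2 (differentiableAt_const d)]
    simp
  show dir a (dir b (f:E3→ℝ)) x = dir b (dir a (f:E3→ℝ)) x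
  rw [key a b, key b a]
  exact ((SA_smooth f).contDiffAt.isSymmSndFDerivAt (by rw [minSmoothness_of_isRCLikeNormedField]; exact WithTop.coe_le_coe.mpr le_top)) a b

/-- Integer-periodicity. -/
def PerInt (f : E3 → ℝ) : Prop :=
  ∀ (x a : E3), (∀ i, ∃ k : ℤ, a i = (k : ℝ)) → f (x + a) = f x

def eqv : (Fin 3 → ℝ) → E3 := (EuclideanSpace.equiv (Fin 3) ℝ).symm

lemma single_int (i : Fin 3) : ∀ j, ∃ k : ℤ, (EuclideanSpace.single i (1:ℝ)) j = (k : ℝ) := by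
  intro j
  refine ⟨if j = i then 1 else 0, ?_⟩
  rw [EuclideanSpace.single_apply]
  split <;> simp

lemma insertNth_succ (i : Fin 3) (c : ℝ) (y : Fin 2 → ℝ) :
    eqv (i.insertNth (c + 1) y) = eqv (i.insertNth c y) + EuclideanSpace.single i (1:ℝ) := by
  have : i.insertNth (c + 1) y = (i.insertNth c y : Fin 3 → ℝ) + Pi.single i (1:ℝ) := by
    funext j
    rcases eq_or_ne j i with h | h
    · subst h; simp [Fin.insertNth_apply_same]
    · obtain ⟨k, rfl⟩ := Fin.exists_succAbove_eq h
      simp [Fin.insertNth_apply_succAbove, Pi.single_eq_of_ne (Fin.succAbove_ne i k)]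
  rw [this]
  show (EuclideanSpace.equiv (Fin 3) ℝ).symm _ = _
  rw [map_add]
  rfl

lemma integral_div_zero (g : Fin 3 → (E3 → ℝ)) (hg : ∀ i, ContDiff ℝ (⊤ : ℕ∞) (g i))
    (hper : ∀ i, PerInt (g i)) (a : Fin 3 → ℝ) :
    ∫ x in Icc a (a + 1), (∑ i, dir (EuclideanSpace.single i (1:ℝ)) (g i) (eqv x)) = 0 := by
  have hle : a ≤ a + 1 := le_add_of_nonneg_right zero_le_one
  have key := integral_divergence_of_hasFDerivAt_off_countable' (n := 2) (a := a) (b := a + 1) hle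
      (fun i x => g i (eqv x))
      (fun i x => (fderiv ℝ (g i) (eqv x)).comp
        ((EuclideanSpace.equiv (Fin 3) ℝ).symm : (Fin 3 → ℝ) →L[ℝ] E3))
      ∅ countable_empty
      (fun i => ((hg i).continuous.comp
        (EuclideanSpace.equiv (Fin 3) ℝ).symm.continuous).continuousOn)
      (fun x _ i => HasFDerivAt.comp x
        (((hg i).differentiable (by simp) _).hasFDerivAt)
        (EuclideanSpace.equiv (Fin 3) ℝ).symm.hasFDerivAt)
      ?_
  · rw [show (fun x : Fin 3 → ℝ => ∑ i, ((fderiv ℝ (g i) (eqv x)).comp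
        ((EuclideanSpace.equiv (Fin 3) ℝ).symm : (Fin 3 → ℝ) →L[ℝ] E3)) (Pi.single i 1))
        = fun x => ∑ i, dir (EuclideanSpace.single i (1:ℝ)) (g i) (eqv x) from rfl] at key
    rw [key]
    apply Finset.sum_eq_zero
    intro i _
    rw [sub_eq_zero]
    apply integral_congr_ae
    apply Filter.EventuallyEq.of_eq
    funext y
    show g i (eqv (i.insertNth ((a + 1) i) y)) = g i (eqv (i.insertNth (a i) y))
    rw [show (a + 1) i = a i + 1 from rfl, insertNth_succ]
    exact hper i _ _ (single_int i)
  · apply ContinuousOn.integrableOn_compact isCompact_Icc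
    apply Continuous.continuousOn
    show Continuous fun x => ∑ i, dir (EuclideanSpace.single i (1:ℝ)) (g i) (eqv x)
    refine continuous_finset_sum _ (fun i _ => ?_)
    exact (contDiff_dir (hg i) _).continuous.comp
      (EuclideanSpace.equiv (Fin 3) ℝ).symm.continuous

lemma W_eq_zero (W : E3 → ℝ) (hW : Continuous W) (hnn : ∀ x, 0 ≤ W x)
    (hint : ∀ a : Fin 3 → ℝ, ∫ x in Icc a (a + 1), W (eqv x) = 0) :
    ∀ p, W p = 0 := by
  intro p
  by_contra hne
  have hpos : 0 < W p := lt_of_le_of_ne (hnn p) (Ne.symm hne)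
  set q : Fin 3 → ℝ := EuclideanSpace.equiv (Fin 3) ℝ p with hq
  have hqp : eqv q = p := (EuclideanSpace.equiv (Fin 3) ℝ).symm_apply_apply p
  set f : (Fin 3 → ℝ) → ℝ := fun x => W (eqv x) with hf
  have hfc : Continuous f := hW.comp (EuclideanSpace.equiv (Fin 3) ℝ).symm.continuous
  have hfq : 0 < f q := by rw [hf]; simpa [hqp] using hpos
  obtain ⟨r, hr, hball⟩ : ∃ r > 0, ∀ y ∈ Metric.ball q r, 0 < f y := by
    have := hfc.continuousAt (x := q)
    rcases Metric.continuousAt_iff.mp this (f q / 2) (by linarith) with ⟨δ, hδ, hd⟩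
    exact ⟨δ, hδ, fun y hy => by
      have := hd (Metric.mem_ball.mp hy)
      have : |f y - f q| < f q / 2 := by simpa [Real.dist_eq] using this
      have := abs_lt.mp this
      linarith [this.1]⟩
  set r' : ℝ := min r (1/2) with hr'
  have hr'pos : 0 < r' := lt_min hr (by norm_num)
  set a : Fin 3 → ℝ := fun i => q i - 1/2 with ha
  have hsub : Metric.ball q r' ⊆ Icc a (a + 1) := by
    intro y hy
    have hd : dist y q < r' := Metric.mem_ball.mp hy
    constructor <;> intro i <;>
      {
        have h1 : dist (y i) (q i) ≤ dist y q := dist_le_pi_dist y q i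
        have : |y i - q i| < 1/2 := by
          rw [← Real.dist_eq]
          exact lt_of_le_of_lt h1 (lt_of_lt_of_le hd (min_le_right _ _))
        have := abs_lt.mp this
        simp only [ha, Pi.add_apply, Pi.one_apply]
        first
          | linarith [this.1, this.2]
      }
  have hInt : IntegrableOn f (Icc a (a + 1)) volume :=
    hfc.continuousOn.integrableOn_compact isCompact_Icc
  have hzero : f =ᵐ[volume.restrict (Icc a (a + 1))] 0 := by
    refine (integral_eq_zero_iff_of_nonneg ?_ hInt).mp (hint a)
    intro x; exact hnn _
  have hμ : volume.restrict (Icc a (a + 1)) {x | f x ≠ 0} = 0 := by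
    rw [← MeasureTheory.ae_iff]
    filter_upwards [hzero] with x hx
    simpa using hx
  have hmeas : MeasurableSet {x | f x ≠ 0} :=
    (isOpen_compl_iff.mpr (isClosed_eq hfc continuous_const)).measurableSet
  rw [Measure.restrict_apply hmeas] at hμ
  have hsub2 : Metric.ball q r' ⊆ {x | f x ≠ 0} ∩ Icc a (a + 1) := fun y hy =>
    ⟨ne_of_gt (hball y (Metric.ball_subset_ball (min_le_left _ _) hy)), hsub hy⟩
  have : volume (Metric.ball q r') = 0 :=
    le_antisymm (hμ ▸ measure_mono hsub2) (by simp)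
  exact absurd this (ne_of_gt (Metric.measure_ball_pos volume q hr'pos))

lemma PerInt.dirD {f : E3 → ℝ} (hf : ContDiff ℝ (⊤ : ℕ∞) f) (hp : PerInt f) (v : E3) :
    PerInt (dir v f) := by
  intro x a ha
  have hfa : (fun y : E3 => f (y + a)) = f := funext fun y => hp y a ha
  have h2 : HasFDerivAt (fun y : E3 => f (y + a)) (fderiv ℝ f (x + a)) x := by
    have h3 := ((hf.differentiable (by simp)) (x + a)).hasFDerivAt
    have h4 : HasFDerivAt (fun y : E3 => y + a) (ContinuousLinearMap.id ℝ E3) x :=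
      (hasFDerivAt_id x).add_const a
    have := h3.comp x h4
    simpa [Function.comp_def] using this
  rw [hfa] at h2
  show fderiv ℝ f (x + a) v = fderiv ℝ f x v
  rw [← h2.fderiv]

lemma PerInt.addP {f g : E3 → ℝ} (hf : PerInt f) (hg : PerInt g) : PerInt (f + g) :=
  fun x a ha => by simp only [Pi.add_apply, hf x a ha, hg x a ha]

lemma PerInt.mulP {f g : E3 → ℝ} (hf : PerInt f) (hg : PerInt g) : PerInt (f * g) :=
  fun x a ha => by simp only [Pi.mul_apply, hf x a ha, hg x a ha]

lemma PerInt.subP {f g : E3 → ℝ} (hf : PerInt f) (hg : PerInt g) : PerInt (f - g) :=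
  fun x a ha => by simp only [Pi.sub_apply, hf x a ha, hg x a ha]

lemma PerInt.oneP : PerInt (1 : E3 → ℝ) := fun _ _ _ => rfl

lemma det_mid_pos {au bu av bv cu du cv dv E : ℝ} (hE : 0 < E)
    (hau : 0 < au) (hbu : 0 < bu) (hav : 0 < av) (hbv : 0 < bv)
    (h1 : au * bu - cu ^ 2 - du ^ 2 = E) (h2 : av * bv - cv ^ 2 - dv ^ 2 = E) :
    (cu + cv) ^ 2 + (du + dv) ^ 2 < (au + av) * (bu + bv) := by
  nlinarith [sq_nonneg (cu * dv - cv * du), sq_nonneg (cu - cv), sq_nonneg (du - dv),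
    mul_pos hau hbv, mul_pos hav hbu, sq_nonneg (au * bv - av * bu),
    mul_pos (mul_pos hau hbv) (mul_pos hav hbu), sq_nonneg (cu * cv + du * dv + E)]

lemma sos_key {A B C D h1 h2 h3 : ℝ} (hA : 0 < A) (hdet : C ^ 2 + D ^ 2 < A * B)
    (hW : 2 * (B * h1 ^ 2 + A * h2 ^ 2 + A * h3 ^ 2) - 4 * (C * h1 * h2 + D * h1 * h3) = 0) :
    h1 = 0 ∧ h2 = 0 ∧ h3 = 0 := by
  have key : (A * h2 - C * h1) ^ 2 + (A * h3 - D * h1) ^ 2 + (A * B - C ^ 2 - D ^ 2) * h1 ^ 2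
      = 0 := by nlinarith [hW]
  have t1 : (A * B - C ^ 2 - D ^ 2) * h1 ^ 2 = 0 := by
    nlinarith [sq_nonneg (A * h2 - C * h1), sq_nonneg (A * h3 - D * h1), sq_nonneg h1,
      mul_nonneg (le_of_lt (by linarith : (0:ℝ) < A * B - C ^ 2 - D ^ 2)) (sq_nonneg h1)]
  have h1z : h1 = 0 := by
    have := mul_eq_zero.mp t1
    rcases this with h | h
    · linarith
    · exact pow_eq_zero_iff (by norm_num) |>.mp h
  subst h1z
  have hs2 : h2 ^ 2 = 0 := by
    nlinarith [mul_pos hA (mul_pos hA hA), sq_nonneg h2, sq_nonneg h3,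
      mul_nonneg hA.le (sq_nonneg h2), mul_nonneg hA.le (sq_nonneg h3)]
  have hs3 : h3 ^ 2 = 0 := by
    nlinarith [sq_nonneg h2, sq_nonneg h3,
      mul_nonneg hA.le (sq_nonneg h2), mul_nonneg hA.le (sq_nonneg h3)]
  exact ⟨rfl, pow_eq_zero_iff (by norm_num) |>.mp hs2, pow_eq_zero_iff (by norm_num) |>.mp hs3⟩

lemma sos_nonneg {A B C D h1 h2 h3 : ℝ} (hA : 0 < A) (hdet : C ^ 2 + D ^ 2 < A * B) :
    0 ≤ 2 * (B * h1 ^ 2 + A * h2 ^ 2 + A * h3 ^ 2) - 4 * (C * h1 * h2 + D * h1 * h3) := by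
  nlinarith [sq_nonneg (A * h2 - C * h1), sq_nonneg (A * h3 - D * h1), sq_nonneg h1,
    mul_nonneg (le_of_lt (by linarith : (0:ℝ) < A * B - C ^ 2 - D ^ 2)) (sq_nonneg h1)]

section Mid
variable (v1 v2 v3 : E3) (U V : SA)

/-- midpoint / difference data (scaled by 2) -/
def sH : SA := U - V
def sA2 : SA := (1+1) + DD v1 (DD v1 U) + DD v1 (DD v1 V)
def sB2 : SA := (1+1) + DD v2 (DD v2 U) + DD v2 (DD v2 V) + DD v3 (DD v3 U) + DD v3 (DD v3 V)
  + DD v3 U + DD v3 V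
def sC2 : SA := DD v1 (DD v2 U) + DD v1 (DD v2 V)
def sD2 : SA := DD v1 (DD v3 U) + DD v1 (DD v3 V)
def sH1 : SA := DD v1 U - DD v1 V
def sH2 : SA := DD v2 U - DD v2 V
def sH3 : SA := DD v3 U - DD v3 V
def sH11 : SA := DD v1 (DD v1 U) - DD v1 (DD v1 V)
def sH22 : SA := DD v2 (DD v2 U) - DD v2 (DD v2 V)
def sH33 : SA := DD v3 (DD v3 U) - DD v3 (DD v3 V)
def sH12 : SA := DD v1 (DD v2 U) - DD v1 (DD v2 V)
def sH13 : SA := DD v1 (DD v3 U) - DD v1 (DD v3 V)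

def sP1 : SA := (sH U V + sH U V) * (sB2 v2 v3 U V * sH1 v1 U V - sC2 v1 v2 U V * sH2 v2 U V
  - sD2 v1 v3 U V * sH3 v3 U V) - sH U V * sH U V * sD2 v1 v3 U V
def sP2' : SA := (sH U V + sH U V) * (sA2 v1 U V * sH2 v2 U V - sC2 v1 v2 U V * sH1 v1 U V)
def sP3' : SA := (sH U V + sH U V) * (sA2 v1 U V * sH3 v3 U V - sD2 v1 v3 U V * sH1 v1 U V)
  + sH U V * sH U V * sA2 v1 U V

def sSOS : SA := (1+1) * (sB2 v2 v3 U V * (sH1 v1 U V * sH1 v1 U V)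
    + sA2 v1 U V * (sH2 v2 U V * sH2 v2 U V) + sA2 v1 U V * (sH3 v3 U V * sH3 v3 U V))
  - (1+1+1+1) * (sC2 v1 v2 U V * (sH1 v1 U V * sH2 v2 U V)
    + sD2 v1 v3 U V * (sH1 v1 U V * sH3 v3 U V))

def sLIN : SA := (sH U V + sH U V) * (sB2 v2 v3 U V * sH11 v1 U V
    + sA2 v1 U V * (sH22 v2 U V + sH33 v3 U V + sH3 v3 U V))
  - (1+1+1+1) * (sC2 v1 v2 U V * (sH U V * sH12 v1 v2 U V)
    + sD2 v1 v3 U V * (sH U V * sH13 v1 v3 U V))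

set_option maxHeartbeats 8000000 in
lemma key_identity :
    DD v1 (sP1 v1 v2 v3 U V) + DD v2 (sP2' v1 v2 U V) + DD v3 (sP3' v1 v3 U V)
      = sSOS v1 v2 v3 U V + sLIN v1 v2 v3 U V := by
  have c21 : ∀ f, DD v2 (DD v1 f) = DD v1 (DD v2 f) := fun f => DD_comm v2 v1 f
  have c31 : ∀ f, DD v3 (DD v1 f) = DD v1 (DD v3 f) := fun f => DD_comm v3 v1 f
  have c32 : ∀ f, DD v3 (DD v2 f) = DD v2 (DD v3 f) := fun f => DD_comm v3 v2 f
  simp only [sP1, sP2', sP3', sSOS, sLIN, sH, sA2, sB2, sC2, sD2, sH1, sH2, sH3, sH11, sH22,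
    sH33, sH12, sH13]
  simp only [DD_sub, DD_add, DD_mul, DD_one, c21, c31, c32]
  ring

end Mid

lemma SA_add_apply (f g : SA) (x : E3) : ((f + g : SA) : E3 → ℝ) x = (f : E3 → ℝ) x + (g : E3 → ℝ) x := rfl
lemma SA_mul_apply (f g : SA) (x : E3) : ((f * g : SA) : E3 → ℝ) x = (f : E3 → ℝ) x * (g : E3 → ℝ) x := rfl
lemma SA_sub_apply (f g : SA) (x : E3) : ((f - g : SA) : E3 → ℝ) x = (f : E3 → ℝ) x - (g : E3 → ℝ) x := rfl
lemma SA_one_apply (x : E3) : ((1 : SA) : E3 → ℝ) x = 1 := rfl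
lemma DD_val (v : E3) (f : SA) : ((DD v f : SA) : E3 → ℝ) = dir v (f : E3 → ℝ) := rfl

/-- direction vectors -/
def XV (th : ℝ) : E3 := Real.cos th • EuclideanSpace.single 0 (1:ℝ)
  - Real.sin th • EuclideanSpace.single 1 (1:ℝ)
def YV (th : ℝ) : E3 := Real.sin th • EuclideanSpace.single 0 (1:ℝ)
  + Real.cos th • EuclideanSpace.single 1 (1:ℝ)
def TV : E3 := EuclideanSpace.single 2 (1:ℝ)

lemma Xd_eq (th : ℝ) (w : E3 → ℝ) : Xd th w = dir (XV th) w := by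
  funext x
  show Real.cos th * fderiv ℝ w x (EuclideanSpace.single 0 1)
      - Real.sin th * fderiv ℝ w x (EuclideanSpace.single 1 1) = fderiv ℝ w x (XV th)
  rw [XV, map_sub, ContinuousLinearMap.map_smul, ContinuousLinearMap.map_smul]
  rfl

lemma Yd_eq (th : ℝ) (w : E3 → ℝ) : Yd th w = dir (YV th) w := by
  funext x
  show Real.sin th * fderiv ℝ w x (EuclideanSpace.single 0 1)
      + Real.cos th * fderiv ℝ w x (EuclideanSpace.single 1 1) = fderiv ℝ w x (YV th)
  rw [YV, map_add, ContinuousLinearMap.map_smul, ContinuousLinearMap.map_smul]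
  rfl

lemma pd_eq (i : Fin 3) (w : E3 → ℝ) : pd i w = dir (EuclideanSpace.single i 1) w := rfl

lemma dir_combo (c s : ℝ) {f g : E3 → ℝ} (hf : ContDiff ℝ (⊤ : ℕ∞) f) (hg : ContDiff ℝ (⊤ : ℕ∞) g)
    (w z : E3) :
    dir w (fun x => c * f x + s * g x) z = c * dir w f z + s * dir w g z := by
  have hf' : DifferentiableAt ℝ f z := (hf.differentiable (by simp)).differentiableAt
  have hg' : DifferentiableAt ℝ g z := (hg.differentiable (by simp)).differentiableAt
  show fderiv ℝ (fun x => c * f x + s * g x) z w = _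
  rw [fderiv_fun_add (hf'.const_mul c) (hg'.const_mul s), fderiv_const_mul hf' c,
    fderiv_const_mul hg' s]
  simp [dir]

/-- the closed unit cube in `E3` -/
def cube : Set E3 := eqv '' (Icc 0 1)

lemma cube_cpt : IsCompact cube :=
  isCompact_Icc.image (EuclideanSpace.equiv (Fin 3) ℝ).symm.continuous

lemma cube_ne : cube.Nonempty := ⟨eqv 0, 0, by simp [mem_Icc], rfl⟩

lemma reduce {u : E3 → ℝ} (hp : PerInt u) (x : E3) : ∃ y ∈ cube, u y = u x := by
  set a : E3 := eqv (fun i => -(⌊x i⌋ : ℝ)) with ha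
  refine ⟨x + a, ⟨fun i => Int.fract (x i), ?_, ?_⟩, ?_⟩
  · rw [mem_Icc]
    constructor <;> intro i
    · exact Int.fract_nonneg (x i)
    · exact (Int.fract_lt_one (x i)).le
  · ext i
    show Int.fract (x i) = x i + a i
    have : a i = -(⌊x i⌋ : ℝ) := rfl
    rw [this, Int.fract]
    ring
  · refine hp x a (fun i => ⟨-⌊x i⌋, ?_⟩)
    show -(⌊x i⌋ : ℝ) = ((-⌊x i⌋ : ℤ) : ℝ)
    push_cast
    ring

lemma sup_attained {u : E3 → ℝ} (hc : Continuous u) (hp : PerInt u) :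
    ∃ x₀, (∀ x, u x ≤ u x₀) ∧ (⨆ x, u x) = u x₀ := by
  obtain ⟨x₀, _, hmax⟩ := cube_cpt.exists_isMaxOn cube_ne hc.continuousOn
  have hb : ∀ x, u x ≤ u x₀ := fun x => by
    obtain ⟨y, hy, hyu⟩ := reduce hp x
    exact hyu ▸ hmax hy
  exact ⟨x₀, hb, le_antisymm (ciSup_le hb)
    (le_ciSup ⟨u x₀, Set.forall_mem_range.mpr hb⟩ x₀)⟩

lemma CLM_zero (L : EuclideanSpace ℝ (Fin 3) →L[ℝ] ℝ)
    (h : ∀ i, L (EuclideanSpace.single i 1) = 0) : L = 0 := by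
  have hb : (L : E3 →ₗ[ℝ] ℝ) = ((0 : E3 →L[ℝ] ℝ) : E3 →ₗ[ℝ] ℝ) := by
    apply Module.Basis.ext (EuclideanSpace.basisFun (Fin 3) ℝ).toBasis
    intro i
    rw [OrthonormalBasis.coe_toBasis, EuclideanSpace.basisFun_apply]
    simpa using h i
  exact ContinuousLinearMap.coe_injective hb

/-- Pointwise nonnegativity of the energy density. -/
lemma pointwise_nonneg {XXu YYu TTu Tu XYu XTu XXv YYv TTv Tv XYv XTv h1 h2 h3 E : ℝ}
    (hE : 0 < E)
    (e1 : (XXu + 1) * (YYu + TTu + Tu + 1) - XYu ^ 2 - XTu ^ 2 = E)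
    (e2 : (XXv + 1) * (YYv + TTv + Tv + 1) - XYv ^ 2 - XTv ^ 2 = E)
    (p1u : 0 < XXu + 1) (p2u : 0 < YYu + TTu + Tu + 1)
    (p1v : 0 < XXv + 1) (p2v : 0 < YYv + TTv + Tv + 1) :
    0 ≤ (1+1) * (((1+1) + YYu + YYv + TTu + TTv + Tu + Tv) * (h1*h1)
        + ((1+1) + XXu + XXv) * (h2*h2) + ((1+1) + XXu + XXv) * (h3*h3))
      - (1+1+1+1) * ((XYu + XYv) * (h1*h2) + (XTu + XTv) * (h1*h3)) := by
  have hdet := det_mid_pos hE p1u p2u p1v p2v e1 e2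
  have hA : 0 < XXu + 1 + (XXv + 1) := by linarith
  have heq : (1+1) * (((1+1) + YYu + YYv + TTu + TTv + Tu + Tv) * (h1*h1)
        + ((1+1) + XXu + XXv) * (h2*h2) + ((1+1) + XXu + XXv) * (h3*h3))
      - (1+1+1+1) * ((XYu + XYv) * (h1*h2) + (XTu + XTv) * (h1*h3))
      = 2 * ((YYu + TTu + Tu + 1 + (YYv + TTv + Tv + 1)) * h1 ^ 2
          + (XXu + 1 + (XXv + 1)) * h2 ^ 2 + (XXu + 1 + (XXv + 1)) * h3 ^ 2)
        - 4 * ((XYu + XYv) * h1 * h2 + (XTu + XTv) * h1 * h3) := by ring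
  rw [heq]
  exact sos_nonneg hA (by nlinarith [hdet])

/-- Pointwise extraction: vanishing energy density forces vanishing gradient. -/
lemma pointwise_zero {XXu YYu TTu Tu XYu XTu XXv YYv TTv Tv XYv XTv h1 h2 h3 E : ℝ}
    (hE : 0 < E)
    (e1 : (XXu + 1) * (YYu + TTu + Tu + 1) - XYu ^ 2 - XTu ^ 2 = E)
    (e2 : (XXv + 1) * (YYv + TTv + Tv + 1) - XYv ^ 2 - XTv ^ 2 = E)
    (p1u : 0 < XXu + 1) (p2u : 0 < YYu + TTu + Tu + 1)
    (p1v : 0 < XXv + 1) (p2v : 0 < YYv + TTv + Tv + 1)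
    (hW : (1+1) * (((1+1) + YYu + YYv + TTu + TTv + Tu + Tv) * (h1*h1)
        + ((1+1) + XXu + XXv) * (h2*h2) + ((1+1) + XXu + XXv) * (h3*h3))
      - (1+1+1+1) * ((XYu + XYv) * (h1*h2) + (XTu + XTv) * (h1*h3)) = 0) :
    h1 = 0 ∧ h2 = 0 ∧ h3 = 0 := by
  have hdet := det_mid_pos hE p1u p2u p1v p2v e1 e2
  have hA : 0 < XXu + 1 + (XXv + 1) := by linarith
  have heq : (1+1) * (((1+1) + YYu + YYv + TTu + TTv + Tu + Tv) * (h1*h1)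
        + ((1+1) + XXu + XXv) * (h2*h2) + ((1+1) + XXu + XXv) * (h3*h3))
      - (1+1+1+1) * ((XYu + XYv) * (h1*h2) + (XTu + XTv) * (h1*h3))
      = 2 * ((YYu + TTu + Tu + 1 + (YYv + TTv + Tv + 1)) * h1 ^ 2
          + (XXu + 1 + (XXv + 1)) * h2 ^ 2 + (XXu + 1 + (XXv + 1)) * h3 ^ 2)
        - 4 * ((XYu + XYv) * h1 * h2 + (XTu + XTv) * h1 * h3) := by ring
  rw [heq] at hW
  exact sos_key hA (by nlinarith [hdet]) hW

/-- The solution predicate. -/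
def Sol (θ : ℝ) (F : E3 → ℝ) (u : E3 → ℝ) : Prop :=
  ContDiff ℝ (⊤ : ℕ∞) u ∧ PerInt u ∧ (⨆ x, u x) = 0 ∧
  (∀ x, (Xd θ (Xd θ u) x + 1) *
        (Yd θ (Yd θ u) x + pd 2 (pd 2 u) x + pd 2 u x + 1) -
      (Yd θ (Xd θ u) x) ^ 2 - (pd 2 (Xd θ u) x) ^ 2 = Real.exp (F x)) ∧
  (∀ x, 0 < Xd θ (Xd θ u) x + 1) ∧
  (∀ x, 0 < Yd θ (Yd θ u) x + pd 2 (pd 2 u) x + pd 2 u x + 1)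

set_option maxHeartbeats 4000000 in
lemma uniqueness (θ : ℝ) (F : E3 → ℝ) (u v : E3 → ℝ)
    (hu : Sol θ F u) (hv : Sol θ F v) : u = v := by
  obtain ⟨hu1, hup, hus, hueq, hupos1, hupos2⟩ := hu
  obtain ⟨hv1, hvp, hvs, hveq, hvpos1, hvpos2⟩ := hv
  set U : SA := ⟨u, hu1⟩ with hUdef
  set V : SA := ⟨v, hv1⟩ with hVdef
  have hUc : ((U : SA) : E3 → ℝ) = u := rfl
  have hVc : ((V : SA) : E3 → ℝ) = v := rfl
  -- conversions of the hypotheses to directional-derivative form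
  have swapU : ∀ a b : E3, dir a (dir b u) = dir b (dir a u) :=
    fun a b => congrArg Subtype.val (DD_comm a b U)
  have swapV : ∀ a b : E3, dir a (dir b v) = dir b (dir a v) :=
    fun a b => congrArg Subtype.val (DD_comm a b V)
  have cXXu : Xd θ (Xd θ u) = dir (XV θ) (dir (XV θ) u) := by rw [Xd_eq, Xd_eq]
  have cYYu : Yd θ (Yd θ u) = dir (YV θ) (dir (YV θ) u) := by rw [Yd_eq, Yd_eq]
  have cYXu : Yd θ (Xd θ u) = dir (XV θ) (dir (YV θ) u) := by
    rw [Xd_eq, Yd_eq, swapU]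
  have cTXu : pd 2 (Xd θ u) = dir (XV θ) (dir TV u) := by
    rw [Xd_eq, pd_eq]
    exact swapU (EuclideanSpace.single 2 1) (XV θ)
  have cXXv : Xd θ (Xd θ v) = dir (XV θ) (dir (XV θ) v) := by rw [Xd_eq, Xd_eq]
  have cYYv : Yd θ (Yd θ v) = dir (YV θ) (dir (YV θ) v) := by rw [Yd_eq, Yd_eq]
  have cYXv : Yd θ (Xd θ v) = dir (XV θ) (dir (YV θ) v) := by
    rw [Xd_eq, Yd_eq, swapV]
  have cTXv : pd 2 (Xd θ v) = dir (XV θ) (dir TV v) := by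
    rw [Xd_eq, pd_eq]
    exact swapV (EuclideanSpace.single 2 1) (XV θ)
  have hueq' : ∀ z, (dir (XV θ) (dir (XV θ) u) z + 1) *
      (dir (YV θ) (dir (YV θ) u) z + dir TV (dir TV u) z + dir TV u z + 1) -
      (dir (XV θ) (dir (YV θ) u) z) ^ 2 - (dir (XV θ) (dir TV u) z) ^ 2 = Real.exp (F z) := by
    intro z
    have := hueq z
    rw [cXXu, cYYu, cYXu, cTXu] at this
    exact this
  have hveq' : ∀ z, (dir (XV θ) (dir (XV θ) v) z + 1) *
      (dir (YV θ) (dir (YV θ) v) z + dir TV (dir TV v) z + dir TV v z + 1) -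
      (dir (XV θ) (dir (YV θ) v) z) ^ 2 - (dir (XV θ) (dir TV v) z) ^ 2 = Real.exp (F z) := by
    intro z
    have := hveq z
    rw [cXXv, cYYv, cYXv, cTXv] at this
    exact this
  have hupos1' : ∀ z, 0 < dir (XV θ) (dir (XV θ) u) z + 1 := fun z => by
    have := hupos1 z; rwa [cXXu] at this
  have hupos2' : ∀ z, 0 < dir (YV θ) (dir (YV θ) u) z + dir TV (dir TV u) z + dir TV u z + 1 :=
    fun z => by have := hupos2 z; rwa [cYYu] at this
  have hvpos1' : ∀ z, 0 < dir (XV θ) (dir (XV θ) v) z + 1 := fun z => by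
    have := hvpos1 z; rwa [cXXv] at this
  have hvpos2' : ∀ z, 0 < dir (YV θ) (dir (YV θ) v) z + dir TV (dir TV v) z + dir TV v z + 1 :=
    fun z => by have := hvpos2 z; rwa [cYYv] at this
  -- periodicity of all atoms
  have pd1u : ∀ w : E3, PerInt (dir w u) := fun w => PerInt.dirD hu1 hup w
  have pd1v : ∀ w : E3, PerInt (dir w v) := fun w => PerInt.dirD hv1 hvp w
  have pd2u : ∀ w w' : E3, PerInt (dir w (dir w' u)) :=
    fun w w' => PerInt.dirD (contDiff_dir hu1 w') (pd1u w') w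
  have pd2v : ∀ w w' : E3, PerInt (dir w (dir w' v)) :=
    fun w w' => PerInt.dirD (contDiff_dir hv1 w') (pd1v w') w
  have per1 : PerInt ((1 : SA) : E3 → ℝ) := PerInt.oneP
  have perH : PerInt ((sH U V : SA) : E3 → ℝ) := hup.subP hvp
  have perA2 : PerInt ((sA2 (XV θ) U V : SA) : E3 → ℝ) :=
    ((per1.addP per1).addP (pd2u (XV θ) (XV θ))).addP (pd2v (XV θ) (XV θ))
  have perB2 : PerInt ((sB2 (YV θ) TV U V : SA) : E3 → ℝ) :=
    ((((((per1.addP per1).addP (pd2u (YV θ) (YV θ))).addP (pd2v (YV θ) (YV θ))).addP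
      (pd2u TV TV)).addP (pd2v TV TV)).addP (pd1u TV)).addP (pd1v TV)
  have perC2 : PerInt ((sC2 (XV θ) (YV θ) U V : SA) : E3 → ℝ) :=
    (pd2u (XV θ) (YV θ)).addP (pd2v (XV θ) (YV θ))
  have perD2 : PerInt ((sD2 (XV θ) TV U V : SA) : E3 → ℝ) :=
    (pd2u (XV θ) TV).addP (pd2v (XV θ) TV)
  have perH1 : PerInt ((sH1 (XV θ) U V : SA) : E3 → ℝ) := (pd1u (XV θ)).subP (pd1v (XV θ))
  have perH2 : PerInt ((sH2 (YV θ) U V : SA) : E3 → ℝ) := (pd1u (YV θ)).subP (pd1v (YV θ))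
  have perH3 : PerInt ((sH3 TV U V : SA) : E3 → ℝ) := (pd1u TV).subP (pd1v TV)
  have perP1 : PerInt ((sP1 (XV θ) (YV θ) TV U V : SA) : E3 → ℝ) :=
    ((perH.addP perH).mulP (((perB2.mulP perH1).subP (perC2.mulP perH2)).subP
      (perD2.mulP perH3))).subP ((perH.mulP perH).mulP perD2)
  have perP2 : PerInt ((sP2' (XV θ) (YV θ) U V : SA) : E3 → ℝ) :=
    (perH.addP perH).mulP ((perA2.mulP perH2).subP (perC2.mulP perH1))
  have perP3 : PerInt ((sP3' (XV θ) TV U V : SA) : E3 → ℝ) :=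
    ((perH.addP perH).mulP ((perA2.mulP perH3).subP (perD2.mulP perH1))).addP
      ((perH.mulP perH).mulP perA2)
  -- the vector field in coordinates
  set P1 : E3 → ℝ := ((sP1 (XV θ) (YV θ) TV U V : SA) : E3 → ℝ) with hP1def
  set P2 : E3 → ℝ := ((sP2' (XV θ) (YV θ) U V : SA) : E3 → ℝ) with hP2def
  set P3 : E3 → ℝ := ((sP3' (XV θ) TV U V : SA) : E3 → ℝ) with hP3def
  have hP1s : ContDiff ℝ (⊤ : ℕ∞) P1 := SA_smooth _
  have hP2s : ContDiff ℝ (⊤ : ℕ∞) P2 := SA_smooth _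
  have hP3s : ContDiff ℝ (⊤ : ℕ∞) P3 := SA_smooth _
  set g : Fin 3 → (E3 → ℝ) :=
    ![fun x => Real.cos θ * P1 x + Real.sin θ * P2 x,
      fun x => -Real.sin θ * P1 x + Real.cos θ * P2 x,
      P3] with hgdef
  have hg : ∀ i, ContDiff ℝ (⊤ : ℕ∞) (g i) := by
    intro i
    fin_cases i
    · exact (contDiff_const.mul hP1s).add (contDiff_const.mul hP2s)
    · exact (contDiff_const.mul hP1s).add (contDiff_const.mul hP2s)
    · exact hP3s
  have hq0 : PerInt (fun x => Real.cos θ * P1 x + Real.sin θ * P2 x) := fun x a ha => by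
    show Real.cos θ * P1 (x+a) + Real.sin θ * P2 (x+a)
        = Real.cos θ * P1 x + Real.sin θ * P2 x
    rw [perP1 x a ha, perP2 x a ha]
  have hq1 : PerInt (fun x => -Real.sin θ * P1 x + Real.cos θ * P2 x) := fun x a ha => by
    show -Real.sin θ * P1 (x+a) + Real.cos θ * P2 (x+a)
        = -Real.sin θ * P1 x + Real.cos θ * P2 x
    rw [perP1 x a ha, perP2 x a ha]
  have hgper : ∀ i, PerInt (g i) := by
    intro i
    fin_cases i
    · exact hq0
    · exact hq1
    · exact perP3
  -- pointwise divergence identity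
  have hkey := key_identity (XV θ) (YV θ) TV U V
  have hdiv : ∀ z, (∑ i, dir (EuclideanSpace.single i (1:ℝ)) (g i) z)
      = ((sSOS (XV θ) (YV θ) TV U V : SA) : E3 → ℝ) z
        + ((sLIN (XV θ) (YV θ) TV U V : SA) : E3 → ℝ) z := by
    intro z
    rw [Fin.sum_univ_three]
    have e0 : g 0 = fun x => Real.cos θ * P1 x + Real.sin θ * P2 x := rfl
    have e1 : g 1 = fun x => -Real.sin θ * P1 x + Real.cos θ * P2 x := rfl
    have e2 : g 2 = P3 := rfl
    rw [e0, e1, e2]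
    rw [dir_combo _ _ hP1s hP2s, dir_combo _ _ hP1s hP2s]
    have dX : ∀ w : E3 → ℝ, dir (XV θ) w z
        = Real.cos θ * dir (EuclideanSpace.single 0 1) w z
          - Real.sin θ * dir (EuclideanSpace.single 1 1) w z := fun w => by
      rw [← Xd_eq]; rfl
    have dY : ∀ w : E3 → ℝ, dir (YV θ) w z
        = Real.sin θ * dir (EuclideanSpace.single 0 1) w z
          + Real.cos θ * dir (EuclideanSpace.single 1 1) w z := fun w => by
      rw [← Yd_eq]; rfl
    have hsum : ((DD (XV θ) (sP1 (XV θ) (YV θ) TV U V) + DD (YV θ) (sP2' (XV θ) (YV θ) U V)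
        + DD TV (sP3' (XV θ) TV U V) : SA) : E3 → ℝ) z
        = dir (XV θ) P1 z + dir (YV θ) P2 z + dir (EuclideanSpace.single 2 1) P3 z := rfl
    rw [← SA_add_apply, ← hkey, hsum, dX P1, dY P2]
    ring
  -- vanishing of the linear part
  have hlin : ∀ z, ((sLIN (XV θ) (YV θ) TV U V : SA) : E3 → ℝ) z = 0 := by
    intro z
    have e1 := hueq' z
    have e2 := hveq' z
    simp only [sLIN, sH, sA2, sB2, sC2, sD2, sH3, sH11, sH22, sH33, sH12, sH13,
      SA_add_apply, SA_mul_apply, SA_sub_apply, SA_one_apply, DD_val, hUc, hVc]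
    linear_combination (4 * (u z - v z)) * e1 - (4 * (u z - v z)) * e2
  -- the energy density
  set Wf : E3 → ℝ := ((sSOS (XV θ) (YV θ) TV U V : SA) : E3 → ℝ) with hWdef
  have hWcont : Continuous Wf := (SA_smooth _).continuous
  have hWnn : ∀ z, 0 ≤ Wf z := by
    intro z
    have e1 := hueq' z
    have e2 := hveq' z
    have key := pointwise_nonneg (Real.exp_pos (F z)) e1 e2 (hupos1' z) (hupos2' z)
      (hvpos1' z) (hvpos2' z)
      (h1 := dir (XV θ) u z - dir (XV θ) v z)
      (h2 := dir (YV θ) u z - dir (YV θ) v z)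
      (h3 := dir TV u z - dir TV v z)
    show 0 ≤ Wf z
    rw [hWdef]
    simp only [sSOS, sH, sA2, sB2, sC2, sD2, sH1, sH2, sH3,
      SA_add_apply, SA_mul_apply, SA_sub_apply, SA_one_apply, DD_val, hUc, hVc]
    nlinarith [key]
  have hint : ∀ a : Fin 3 → ℝ, ∫ x in Icc a (a + 1), Wf (eqv x) = 0 := by
    intro a
    have : (fun x : Fin 3 → ℝ => Wf (eqv x))
        = fun x => ∑ i, dir (EuclideanSpace.single i (1:ℝ)) (g i) (eqv x) := by
      funext x
      rw [hdiv (eqv x), hlin (eqv x), add_zero, hWdef]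
    rw [this]
    exact integral_div_zero g hg hgper a
  have hW0 : ∀ z, Wf z = 0 := W_eq_zero Wf hWcont hWnn hint
  -- vanishing of the gradient of u - v
  have hgrad : ∀ z, (dir (XV θ) u z - dir (XV θ) v z = 0)
      ∧ (dir (YV θ) u z - dir (YV θ) v z = 0) ∧ (dir TV u z - dir TV v z = 0) := by
    intro z
    have e1 := hueq' z
    have e2 := hveq' z
    apply pointwise_zero (Real.exp_pos (F z)) e1 e2 (hupos1' z) (hupos2' z)
      (hvpos1' z) (hvpos2' z)
    have h0 := hW0 z
    rw [hWdef] at h0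
    simp only [sSOS, sH, sA2, sB2, sC2, sD2, sH1, sH2, sH3,
      SA_add_apply, SA_mul_apply, SA_sub_apply, SA_one_apply, DD_val, hUc, hVc] at h0
    linear_combination h0
  have hdiffsub : Differentiable ℝ (fun x => u x - v x) :=
    ((hu1.sub hv1).differentiable (by simp))
  have hfd0 : ∀ z, fderiv ℝ (fun x => u x - v x) z = 0 := by
    intro z
    obtain ⟨hz1, hz2, hz3⟩ := hgrad z
    have hsubd : ∀ w : E3, fderiv ℝ (fun x => u x - v x) z w = dir w u z - dir w v z := by
      intro w
      rw [fderiv_fun_sub ((hu1.differentiable (by simp)).differentiableAt)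
        ((hv1.differentiable (by simp)).differentiableAt)]
      rfl
    have dXu : dir (XV θ) u z = Real.cos θ * dir (EuclideanSpace.single 0 1) u z
        - Real.sin θ * dir (EuclideanSpace.single 1 1) u z := by rw [← Xd_eq]; rfl
    have dXv : dir (XV θ) v z = Real.cos θ * dir (EuclideanSpace.single 0 1) v z
        - Real.sin θ * dir (EuclideanSpace.single 1 1) v z := by rw [← Xd_eq]; rfl
    have dYu : dir (YV θ) u z = Real.sin θ * dir (EuclideanSpace.single 0 1) u z
        + Real.cos θ * dir (EuclideanSpace.single 1 1) u z := by rw [← Yd_eq]; rfl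
    have dYv : dir (YV θ) v z = Real.sin θ * dir (EuclideanSpace.single 0 1) v z
        + Real.cos θ * dir (EuclideanSpace.single 1 1) v z := by rw [← Yd_eq]; rfl
    rw [dXu, dXv] at hz1
    rw [dYu, dYv] at hz2
    have pyth := Real.sin_sq_add_cos_sq θ
    apply CLM_zero
    intro i
    rw [hsubd]
    fin_cases i
    · show dir (EuclideanSpace.single 0 1) u z - dir (EuclideanSpace.single 0 1) v z = 0
      linear_combination Real.cos θ * hz1 + Real.sin θ * hz2
        - (dir (EuclideanSpace.single 0 1) u z - dir (EuclideanSpace.single 0 1) v z) * pyth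
    · show dir (EuclideanSpace.single 1 1) u z - dir (EuclideanSpace.single 1 1) v z = 0
      linear_combination (- Real.sin θ) * hz1 + Real.cos θ * hz2
        - (dir (EuclideanSpace.single 1 1) u z - dir (EuclideanSpace.single 1 1) v z) * pyth
    · show dir (EuclideanSpace.single 2 1) u z - dir (EuclideanSpace.single 2 1) v z = 0
      exact hz3
  have hconst := is_const_of_fderiv_eq_zero hdiffsub hfd0
  -- endgame via the normalization
  obtain ⟨xu, hxub, hxus⟩ := sup_attained (hu1.continuous) hup
  obtain ⟨xv, hxvb, hxvs⟩ := sup_attained (hv1.continuous) hvp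
  have hu0 : u xu = 0 := by rw [← hxus, hus]
  have hv0 : v xv = 0 := by rw [← hxvs, hvs]
  funext x
  have h1 := hconst x xu
  have h2 := hconst x xv
  have h3 : v xu ≤ 0 := by
    have := hxvb xu
    rw [hv0] at this
    exact this
  have h4 : u xv ≤ 0 := by
    have := hxub xv
    rw [hu0] at this
    exact this
  have h5 : u x - v x = 0 - v xu := by rw [← hu0]; exact h1
  have h6 : u x - v x = u xv - 0 := by rw [← hv0]; exact h2
  linarith

end KTaux

/-- The uniform `L^∞` a priori estimate for the reduced Calabi–Yau equation (3.5) on `T³`: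
for every `θ` and smooth `ℤ³`-periodic `F` there is `C > 0` such that every smooth
`ℤ³`-periodic solution `u` with `sup u = 0` of
`(u_XX + 1)(u_YY + u_tt + u_t + 1) − u_XY² − u_Xt² = e^F` with both factors positive
satisfies `‖u‖_{L^∞} ≤ C`. -/
theorem linfty_estimate_kodaira_thurston (θ : ℝ)
    (F : EuclideanSpace ℝ (Fin 3) → ℝ) (hF : ContDiff ℝ (⊤ : ℕ∞) F)
    (hFper : ∀ (x a : EuclideanSpace ℝ (Fin 3)), (∀ i, ∃ k : ℤ, a i = (k : ℝ)) →
      F (x + a) = F x) :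
    ∃ C : ℝ, 0 < C ∧
      ∀ u : EuclideanSpace ℝ (Fin 3) → ℝ,
        ContDiff ℝ (⊤ : ℕ∞) u →
        (∀ (x a : EuclideanSpace ℝ (Fin 3)), (∀ i, ∃ k : ℤ, a i = (k : ℝ)) →
          u (x + a) = u x) →
        (⨆ x, u x) = 0 →
        (∀ x, (Xd θ (Xd θ u) x + 1) *
              (Yd θ (Yd θ u) x + pd 2 (pd 2 u) x + pd 2 u x + 1) -
            (Yd θ (Xd θ u) x) ^ 2 - (pd 2 (Xd θ u) x) ^ 2 = Real.exp (F x)) →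
        (∀ x, 0 < Xd θ (Xd θ u) x + 1) →
        (∀ x, 0 < Yd θ (Yd θ u) x + pd 2 (pd 2 u) x + pd 2 u x + 1) →
        ∀ x, |u x| ≤ C := by
  classical
  by_cases hex : ∃ u, Sol θ F u
  · obtain ⟨u₀, hu₀⟩ := hex
    have hcont : Continuous u₀ := hu₀.1.continuous
    have hcpt : IsCompact ((fun y => |u₀ y|) '' cube) :=
      cube_cpt.image (continuous_abs.comp hcont)
    have hbdd : BddAbove ((fun y => |u₀ y|) '' cube) := hcpt.bddAbove
    have hne : ((fun y => |u₀ y|) '' cube).Nonempty := cube_ne.image _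
    set M := sSup ((fun y => |u₀ y|) '' cube) with hM
    have hM0 : 0 ≤ M := by
      obtain ⟨m, hm⟩ := hne
      obtain ⟨y, hy, rfl⟩ := hm
      exact le_trans (abs_nonneg _) (le_csSup hbdd ⟨y, hy, rfl⟩)
    refine ⟨M + 1, by linarith, ?_⟩
    intro u h1 h2 h3 h4 h5 h6 x
    have huu : u = u₀ := uniqueness θ F u u₀ ⟨h1, h2, h3, h4, h5, h6⟩ hu₀
    obtain ⟨y, hy, hyx⟩ := reduce hu₀.2.1 x
    have : |u₀ x| ≤ M := by
      rw [← hyx]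
      exact le_csSup hbdd ⟨y, hy, rfl⟩
    rw [huu]
    linarith
  · refine ⟨1, one_pos, ?_⟩
    intro u h1 h2 h3 h4 h5 h6 x
    exact absurd ⟨u, h1, h2, h3, h4, h5, h6⟩ hex
end

section
/- Let J be a real 4×4 matrix satisfying Jᵀ J = I and J² = −I, and let H be a real symmetric positive semidefinite 4×4 matrix. Define the J-invariant part H^J = (1/2)(H + Jᵀ H J). Then H^J is symmetric positive semidefinite and det H ≤ 8 · det(H^J). -/
/-!
Determinants of positive semidefinite matrices are superadditive: writing `A = Rᴴ R` with `R`
invertible, `A + B = Rᴴ (1 + C) R` with `C = R⁻ᴴ B R⁻¹ ⪰ 0`, so the claim reduces to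
`det (1 + C) ≥ 1 + det C`, i.e. `∏ (1 + λᵢ) ≥ 1 + ∏ λᵢ` for the eigenvalues `λᵢ ≥ 0` of `C`.
Since `J` is orthogonal, `det (Jᵀ H J) = det H`, hence `det (H + Jᵀ H J) ≥ 2 det H`, and halving
a `4 × 4` matrix divides its determinant by `16`.
-/

open Matrix

theorem Finset.one_add_prod_le_prod_one_add {ι R : Type*} [CommSemiring R] [PartialOrder R]
    [IsOrderedRing R] {s : Finset ι} (hs : s.Nonempty) {f : ι → R} (hf : ∀ i ∈ s, 0 ≤ f i) :
    1 + ∏ i ∈ s, f i ≤ ∏ i ∈ s, (1 + f i) := by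
  obtain ⟨i, hi⟩ := hs
  simpa using Finset.prod_add_prod_le (g := 1) hi le_rfl
    (fun j hj _ => le_add_of_nonneg_right (hf j hj))
    (fun _ _ _ => le_add_of_nonneg_left zero_le_one) (fun _ _ => zero_le_one) hf

namespace Matrix

variable {n : Type*} [Fintype n] [DecidableEq n]

theorem IsHermitian.det_cfc {A : Matrix n n ℝ} (hA : A.IsHermitian) (f : ℝ → ℝ) :
    (cfc f A).det = ∏ i, f (hA.eigenvalues i) := by
  rw [hA.cfc_eq]
  simp [IsHermitian.cfc, -Unitary.conjStarAlgAut_apply]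

theorem PosSemidef.one_add_det_le_det_one_add [Nonempty n] {C : Matrix n n ℝ}
    (hC : C.PosSemidef) : 1 + C.det ≤ (1 + C).det := by
  have hCsa : IsSelfAdjoint C := hC.1
  have hcfc : 1 + C = cfc (fun x : ℝ => 1 + x) C := by
    rw [cfc_add .., cfc_const_one .., cfc_id' ..]
  rw [hcfc, hC.1.det_cfc, hC.1.det_eq_prod_eigenvalues]
  exact Finset.one_add_prod_le_prod_one_add Finset.univ_nonempty
    fun i _ => hC.eigenvalues_nonneg i

open scoped MatrixOrder in
theorem PosDef.det_add_det_le_det_add [Nonempty n] {A B : Matrix n n ℝ} (hA : A.PosDef)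
    (hB : B.PosSemidef) : A.det + B.det ≤ (A + B).det := by
  obtain ⟨R, hR, rfl⟩ :=
    CStarAlgebra.isStrictlyPositive_iff_eq_star_mul_self.mp hA.isStrictlyPositive
  rw [star_eq_conjTranspose]
  have hRdet : IsUnit R.det := (isUnit_iff_isUnit_det R).mp hR
  set C : Matrix n n ℝ := R⁻¹ᴴ * B * R⁻¹
  have hC : C.PosSemidef := hB.conjTranspose_mul_mul_same R⁻¹
  have hBC : B = Rᴴ * C * R := by
    have hcancel : Rᴴ * C * R = (R⁻¹ * R)ᴴ * B * (R⁻¹ * R) := by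
      simp only [C, conjTranspose_mul]; noncomm_ring
    rw [hcancel, nonsing_inv_mul _ hRdet, conjTranspose_one, one_mul, mul_one]
  have hsum : Rᴴ * R + B = Rᴴ * (1 + C) * R := by
    rw [hBC]; noncomm_ring
  have hdet : 0 ≤ (Rᴴ * R).det := by simpa [star_eq_conjTranspose] using hA.det_pos.le
  calc (Rᴴ * R).det + B.det = (Rᴴ * R).det * (1 + C.det) := by
        rw [hBC]; simp only [det_mul]; ring
    _ ≤ (Rᴴ * R).det * (1 + C).det :=
        mul_le_mul_of_nonneg_left hC.one_add_det_le_det_one_add hdet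
    _ = (Rᴴ * R + B).det := by rw [hsum]; simp only [det_mul]; ring

theorem PosSemidef.det_add_det_le_det_add [Nonempty n] {A B : Matrix n n ℝ}
    (hA : A.PosSemidef) (hB : B.PosSemidef) : A.det + B.det ≤ (A + B).det := by
  by_cases hA0 : A.det = 0
  · by_cases hB0 : B.det = 0
    · rw [hA0, hB0, add_zero]
      exact (hA.add hB).det_nonneg
    · rw [add_comm A.det, add_comm A]
      exact (hB.posDef_iff_det_ne_zero.mpr hB0).det_add_det_le_det_add hA
  · exact (hA.posDef_iff_det_ne_zero.mpr hA0).det_add_det_le_det_add hB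

theorem det_transpose_mul_mul_of_transpose_mul_self_eq_one {R : Type*} [CommRing R]
    {J : Matrix n n R} (hJ : Jᵀ * J = 1) (H : Matrix n n R) : (Jᵀ * H * J).det = H.det := by
  calc (Jᵀ * H * J).det = (Jᵀ * J).det * H.det := by simp only [det_mul]; ring
    _ = H.det := by rw [hJ, det_one, one_mul]

end Matrix

theorem det_le_J_invariant_part_general
    (J H : Matrix (Fin 4) (Fin 4) ℝ)
    (hJorth : Jᵀ * J = 1)
    (hH : H.PosSemidef) :
    ((1 / 2 : ℝ) • (H + Jᵀ * H * J)).PosSemidef ∧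
      H.det ≤ 8 * ((1 / 2 : ℝ) • (H + Jᵀ * H * J)).det := by
  have hHJ : (Jᵀ * H * J).PosSemidef := by
    simpa [conjTranspose_eq_transpose_of_trivial] using hH.conjTranspose_mul_mul_same J
  refine ⟨(hH.add hHJ).smul (by norm_num), ?_⟩
  have hsuper := hH.det_add_det_le_det_add hHJ
  rw [det_transpose_mul_mul_of_transpose_mul_self_eq_one hJorth] at hsuper
  rw [det_smul, Fintype.card_fin]
  linarith

/-- The linear-algebra lemma used in the proof of Theorem 1.2: if `J` is an orthogonal almost
complex structure (`Jᵀ J = I`, `J² = −I`) on `ℝ⁴` and `H` is symmetric positive semidefinite,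
then the `J`-invariant part `H^J = (H + Jᵀ H J)/2` is positive semidefinite and
`det H ≤ 8 det H^J`. -/
theorem det_le_J_invariant_part
    (J H : Matrix (Fin 4) (Fin 4) ℝ)
    (hJorth : Jᵀ * J = 1) (hJsq : J * J = -1)
    (hH : H.PosSemidef) :
    ((1 / 2 : ℝ) • (H + Jᵀ * H * J)).PosSemidef ∧
      H.det ≤ 8 * ((1 / 2 : ℝ) • (H + Jᵀ * H * J)).det :=
  det_le_J_invariant_part_general J H hJorth hH
end
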